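/- arXiv:1802.05519 — 3 statements merged into one kernel-verified Lean document; each statement's English description precedes it below -/
import Mathlib

section
/- Let (u_j)_{j=1}^l be a classical solution of the regularized thin-film system on the graph on [0,T]. Then the energy identity holds: for every t ∈ [0,T], (1/2) ∑_{j=1}^l ∫₀¹ (∂_s u_j(s,t))² ds + ∑_{j=1}^l ∫₀ᵗ ∫₀¹ f_ε(u_j(s,σ)) (∂_s w_j(s,σ))² ds dσ = (1/2) ∑_{j=1}^l ∫₀¹ (∂_s u_j(s,0))² ds. In particular the energy E(t) := (1/2)∑_j ∫₀¹ (∂_s u_j(s,t))² ds is nonincreasing in t. -/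
open Set MeasureTheory intervalIntegral Real Filter

/-- The regularized mobility `f_ε(z) = |z|^n + ε`. -/
noncomputable def tfeF (n ε z : ℝ) : ℝ := |z| ^ n + ε

/-- `w = -∂_s² u` for a function `u = u(s,t)` of two variables. -/
noncomputable def tfeW (u : ℝ → ℝ → ℝ) (s t : ℝ) : ℝ :=
  -(iteratedDeriv 2 (fun x => u x t) s)

/-- A classical solution of the regularized thin-film system on a metric graph with
edges `j : Fin l` (parameterized over `[0,1]`, with tail vertex `tl j` at `s = 0` and
head vertex `hd j` at `s = 1`), boundary vertex set `bdry`, on the time interval `[0,T]`. -/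
structure IsGraphTFESolution {l m : ℕ} (n ε T : ℝ) (tl hd : Fin l → Fin m)
    (bdry : Set (Fin m)) (u : Fin l → ℝ → ℝ → ℝ) : Prop where
  /-- regularity (in particular `C^{4,1}`) -/
  smooth : ∀ j, ContDiff ℝ 4 (fun p : ℝ × ℝ => u j p.1 p.2)
  /-- the PDE `∂_t u_j = ∂_s (f_ε(u_j) ∂_s w_j)` -/
  pde : ∀ j, ∀ s ∈ Icc (0:ℝ) 1, ∀ t ∈ Icc (0:ℝ) T,
    deriv (fun τ => u j s τ) t
      = deriv (fun x => tfeF n ε (u j x t) * deriv (fun y => tfeW (u j) y t) x) s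
  /-- continuity of `u` at interior vertices -/
  cont_u_hh : ∀ a ∉ bdry, ∀ t ∈ Icc (0:ℝ) T, ∀ j j', hd j = a → hd j' = a →
    u j 1 t = u j' 1 t
  cont_u_tt : ∀ a ∉ bdry, ∀ t ∈ Icc (0:ℝ) T, ∀ i i', tl i = a → tl i' = a →
    u i 0 t = u i' 0 t
  cont_u_ht : ∀ a ∉ bdry, ∀ t ∈ Icc (0:ℝ) T, ∀ j i, hd j = a → tl i = a →
    u j 1 t = u i 0 t
  /-- continuity of `w` at interior vertices -/
  cont_w_hh : ∀ a ∉ bdry, ∀ t ∈ Icc (0:ℝ) T, ∀ j j', hd j = a → hd j' = a →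
    tfeW (u j) 1 t = tfeW (u j') 1 t
  cont_w_tt : ∀ a ∉ bdry, ∀ t ∈ Icc (0:ℝ) T, ∀ i i', tl i = a → tl i' = a →
    tfeW (u i) 0 t = tfeW (u i') 0 t
  cont_w_ht : ∀ a ∉ bdry, ∀ t ∈ Icc (0:ℝ) T, ∀ j i, hd j = a → tl i = a →
    tfeW (u j) 1 t = tfeW (u i) 0 t
  /-- Kirchhoff balance of `∂_s u` at interior vertices -/
  kirchhoff_u : ∀ a ∉ bdry, ∀ t ∈ Icc (0:ℝ) T,
    ∑ j ∈ Finset.univ.filter (fun j => hd j = a), deriv (fun x => u j x t) 1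
      = ∑ i ∈ Finset.univ.filter (fun i => tl i = a), deriv (fun x => u i x t) 0
  /-- Kirchhoff balance of `∂_s w` at interior vertices -/
  kirchhoff_w : ∀ a ∉ bdry, ∀ t ∈ Icc (0:ℝ) T,
    ∑ j ∈ Finset.univ.filter (fun j => hd j = a), deriv (fun x => tfeW (u j) x t) 1
      = ∑ i ∈ Finset.univ.filter (fun i => tl i = a), deriv (fun x => tfeW (u i) x t) 0
  /-- no-flux conditions at boundary vertices (head side) -/
  bdry_head : ∀ a ∈ bdry, ∀ t ∈ Icc (0:ℝ) T, ∀ j, hd j = a →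
    deriv (fun x => u j x t) 1 = 0 ∧ deriv (fun x => tfeW (u j) x t) 1 = 0
  /-- no-flux conditions at boundary vertices (tail side) -/
  bdry_tail : ∀ a ∈ bdry, ∀ t ∈ Icc (0:ℝ) T, ∀ i, tl i = a →
    deriv (fun x => u i x t) 0 = 0 ∧ deriv (fun x => tfeW (u i) x t) 0 = 0

noncomputable section EnergyAux

/-- uncurrying of a function of two real variables -/
def ucr (u : ℝ → ℝ → ℝ) : ℝ × ℝ → ℝ := fun p => u p.1 p.2

/-- partial derivative in the first variable -/
noncomputable def pds (F : ℝ × ℝ → ℝ) : ℝ × ℝ → ℝ := fun p => fderiv ℝ F p (1, 0)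

/-- partial derivative in the second variable -/
noncomputable def pdt (F : ℝ × ℝ → ℝ) : ℝ × ℝ → ℝ := fun p => fderiv ℝ F p (0, 1)

lemma contDiff_pds {k n : WithTop ℕ∞} {F : ℝ × ℝ → ℝ} (h : ContDiff ℝ n F) (hk : k + 1 ≤ n) :
    ContDiff ℝ k (pds F) := (h.fderiv_right hk).clm_apply contDiff_const

lemma contDiff_pdt {k n : WithTop ℕ∞} {F : ℝ × ℝ → ℝ} (h : ContDiff ℝ n F) (hk : k + 1 ≤ n) :
    ContDiff ℝ k (pdt F) := (h.fderiv_right hk).clm_apply contDiff_const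

lemma hasDerivAt_pds {n : WithTop ℕ∞} {F : ℝ × ℝ → ℝ} (h : ContDiff ℝ n F) (hn : 1 ≤ n)
    (s t : ℝ) : HasDerivAt (fun x => F (x, t)) (pds F (s, t)) s :=
  ((h.differentiable (zero_lt_one.trans_le hn).ne') (s, t)).hasFDerivAt.comp_hasDerivAt s
    ((hasDerivAt_id s).prodMk (hasDerivAt_const s t))

lemma hasDerivAt_pdt {n : WithTop ℕ∞} {F : ℝ × ℝ → ℝ} (h : ContDiff ℝ n F) (hn : 1 ≤ n)
    (s t : ℝ) : HasDerivAt (fun τ => F (s, τ)) (pdt F (s, t)) t :=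
  ((h.differentiable (zero_lt_one.trans_le hn).ne') (s, t)).hasFDerivAt.comp_hasDerivAt t
    ((hasDerivAt_const t s).prodMk (hasDerivAt_id t))

lemma pdt_pds_comm {F : ℝ × ℝ → ℝ} (h : ContDiff ℝ 2 F) : pdt (pds F) = pds (pdt F) := by
  funext p
  have hdiff : DifferentiableAt ℝ (fderiv ℝ F) p :=
    ((h.fderiv_right (m := 1) (by norm_num)).differentiable one_ne_zero) p
  have e1 : pdt (pds F) p = fderiv ℝ (fderiv ℝ F) p (0, 1) (1, 0) := by
    show fderiv ℝ (fun q => fderiv ℝ F q (1, 0)) p (0, 1) = _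
    rw [fderiv_clm_apply hdiff (differentiableAt_const _)]
    simp
  have e2 : pds (pdt F) p = fderiv ℝ (fderiv ℝ F) p (1, 0) (0, 1) := by
    show fderiv ℝ (fun q => fderiv ℝ F q (0, 1)) p (1, 0) = _
    rw [fderiv_clm_apply hdiff (differentiableAt_const _)]
    simp
  rw [e1, e2]
  exact second_derivative_symmetric (f'' := fderiv ℝ (fderiv ℝ F) p)
    (fun y => ((h.differentiable two_ne_zero) y).hasFDerivAt) hdiff.hasFDerivAt _ _

/-! ### bridges between `deriv`/`iteratedDeriv`/`tfeW` language and `pds`/`pdt` -/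

lemma bridge_us {U : ℝ → ℝ → ℝ} (hU : ContDiff ℝ 4 (ucr U)) (s t : ℝ) :
    deriv (fun x => U x t) s = pds (ucr U) (s, t) :=
  HasDerivAt.deriv (hasDerivAt_pds hU (by norm_num) s t)

lemma bridge_ut {U : ℝ → ℝ → ℝ} (hU : ContDiff ℝ 4 (ucr U)) (s t : ℝ) :
    deriv (fun τ => U s τ) t = pdt (ucr U) (s, t) :=
  HasDerivAt.deriv (hasDerivAt_pdt hU (by norm_num) s t)

lemma bridge_w {U : ℝ → ℝ → ℝ} (hU : ContDiff ℝ 4 (ucr U)) (s t : ℝ) :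
    tfeW U s t = -(pds (pds (ucr U)) (s, t)) := by
  unfold tfeW
  congr 1
  rw [iteratedDeriv_succ, iteratedDeriv_one]
  have h1 : deriv (fun x => U x t) = fun x => pds (ucr U) (x, t) :=
    funext fun x => bridge_us hU x t
  rw [h1]
  exact HasDerivAt.deriv (hasDerivAt_pds (contDiff_pds (k := 3) hU (by norm_num)) (by norm_num) s t)

lemma bridge_ws {U : ℝ → ℝ → ℝ} (hU : ContDiff ℝ 4 (ucr U)) (s t : ℝ) :
    deriv (fun x => tfeW U x t) s = -(pds (pds (pds (ucr U))) (s, t)) := by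
  have h1 : (fun x => tfeW U x t) = fun x => -(pds (pds (ucr U)) (x, t)) :=
    funext fun x => bridge_w hU x t
  rw [h1, deriv.fun_neg]
  congr 1
  exact HasDerivAt.deriv (hasDerivAt_pds
    (contDiff_pds (k := 2) (contDiff_pds (k := 3) hU (by norm_num)) (by norm_num)) (by norm_num) s t)

end EnergyAux

section RpowAux

lemma rpow_sub_one_mul {b : ℝ} (hb : 0 < b) (n : ℝ) : b ^ (n - 1) * b = b ^ n :=
  calc b ^ (n-1) * b = b ^ (n-1) * b ^ (1:ℝ) := by rw [Real.rpow_one]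
  _ = b ^ (n - 1 + 1) := (Real.rpow_add hb _ _).symm
  _ = b ^ n := by ring_nf

lemma rpow_div_aux {a b : ℝ} (ha : 0 ≤ a) (hb : 0 < b) (n : ℝ) :
    (a / b) ^ n * b ^ (n - 1) = a ^ n / b := by
  rw [Real.div_rpow ha hb.le, div_mul_eq_mul_div,
    div_eq_div_iff (by positivity : (0:ℝ) < b ^ n).ne' hb.ne', ← rpow_sub_one_mul hb n]
  ring

lemma slope_abs_rpow_eq {v : ℝ → ℝ} {x : ℝ} (hx : v x = 0) {n : ℝ} (hn : 0 < n) {y : ℝ}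
    (hy : x < y) :
    slope (fun y => |v y| ^ n) x y = |slope v x y| ^ n * (y - x) ^ (n - 1) := by
  have hyx : (0:ℝ) < y - x := sub_pos.2 hy
  rw [slope_def_field, slope_def_field, hx, sub_zero, abs_zero, Real.zero_rpow hn.ne', sub_zero,
    abs_div, abs_of_pos hyx, rpow_div_aux (abs_nonneg _) hyx]

lemma abs_slope_abs_rpow_eq {v : ℝ → ℝ} {x : ℝ} (hx : v x = 0) {n : ℝ} (hn : 0 < n) {y : ℝ}
    (hy : y ≠ x) :
    |slope (fun y => |v y| ^ n) x y| = |slope v x y| ^ n * |y - x| ^ (n - 1) := by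
  have hyx : (0:ℝ) < |y - x| := abs_pos.2 (sub_ne_zero.2 hy)
  rw [slope_def_field, slope_def_field, hx, sub_zero, abs_zero, Real.zero_rpow hn.ne', sub_zero,
    abs_div, abs_div, abs_of_nonneg (Real.rpow_nonneg (abs_nonneg _) n),
    rpow_div_aux (abs_nonneg _) hyx]

lemma hasDerivAt_abs_rpow_of_ne {n : ℝ} {z : ℝ} (hz : z ≠ 0) :
    HasDerivAt (fun y : ℝ => |y| ^ n) (n * |z| ^ (n - 1) * (if 0 < z then 1 else -1)) z := by
  rcases hz.lt_or_gt with h | h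
  · have h1 : HasDerivAt (fun y : ℝ => (-y) ^ n) (n * (-z) ^ (n - 1) * (-1)) z := by
      have := (Real.hasDerivAt_rpow_const (x := -z) (p := n)
        (Or.inl (by linarith))).comp z (hasDerivAt_neg z)
      exact this
    have h2 : (fun y : ℝ => |y| ^ n) =ᶠ[nhds z] (fun y => (-y) ^ n) := by
      filter_upwards [Iio_mem_nhds h] with y hy
      rw [abs_of_neg hy]
    have h3 := h1.congr_of_eventuallyEq h2
    refine h3.congr_deriv ?_
    rw [if_neg (not_lt.2 h.le), abs_of_neg h]
  · have h1 : HasDerivAt (fun y : ℝ => y ^ n) (n * z ^ (n - 1)) z :=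
      Real.hasDerivAt_rpow_const (Or.inl hz)
    have h2 : (fun y : ℝ => |y| ^ n) =ᶠ[nhds z] (fun y => y ^ n) := by
      filter_upwards [Ioi_mem_nhds h] with y hy
      rw [abs_of_pos hy]
    have h3 := h1.congr_of_eventuallyEq h2
    refine h3.congr_deriv ?_
    rw [if_pos h, abs_of_pos h]; ring

lemma hasDerivWithinAt_abs_rpow_zero {v : ℝ → ℝ} {x dv : ℝ} (hv : HasDerivAt v dv x)
    {n : ℝ} (hn : 1 ≤ n) (hx : v x = 0) :
    HasDerivWithinAt (fun y => |v y| ^ n) (if n = 1 then |dv| else 0) (Ioi x) x := by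
  rw [hasDerivWithinAt_iff_tendsto_slope]
  have hmem : Ioi x \ {x} ⊆ ({x}ᶜ : Set ℝ) := fun y hy => hy.2
  have hslope : Tendsto (slope v x) (nhdsWithin x (Ioi x \ {x})) (nhds dv) :=
    (hasDerivAt_iff_tendsto_slope.1 hv).mono_left (nhdsWithin_mono x hmem)
  have habs : Tendsto (fun y => |slope v x y|) (nhdsWithin x (Ioi x \ {x})) (nhds |dv|) :=
    hslope.abs
  by_cases h1 : n = 1
  · rw [if_pos h1]
    refine habs.congr' ?_
    filter_upwards [self_mem_nhdsWithin] with y hy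
    rw [slope_abs_rpow_eq hx (by linarith) hy.1, h1]
    simp
  · have h1' : 1 < n := lt_of_le_of_ne hn (Ne.symm h1)
    rw [if_neg h1]
    have T1 : Tendsto (fun y => |slope v x y| ^ n) (nhdsWithin x (Ioi x \ {x}))
        (nhds (|dv| ^ n)) :=
      (Real.continuousAt_rpow_const _ n (Or.inr (by linarith))).tendsto.comp habs
    have T0 : Tendsto (fun y => y - x) (nhdsWithin x (Ioi x \ {x})) (nhds 0) := by
      have hc : Continuous fun y : ℝ => y - x := continuous_id.sub continuous_const
      have := (hc.tendsto x).mono_left (nhdsWithin_le_nhds (s := Ioi x \ {x}))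
      simpa using this
    have T2 : Tendsto (fun y => (y - x) ^ (n - 1)) (nhdsWithin x (Ioi x \ {x})) (nhds 0) := by
      have hc : ContinuousAt (fun t : ℝ => t ^ (n - 1)) 0 :=
        Real.continuousAt_rpow_const 0 (n - 1) (Or.inr (by linarith))
      have := hc.tendsto.comp T0
      simpa [Real.zero_rpow (by linarith : n - 1 ≠ 0), Function.comp_def] using this
    have hT := T1.mul T2
    rw [mul_zero] at hT
    refine hT.congr' ?_
    filter_upwards [self_mem_nhdsWithin] with y hy
    exact (slope_abs_rpow_eq hx (by linarith) hy.1).symm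

lemma hasDerivAt_abs_rpow_zero {v : ℝ → ℝ} {x dv : ℝ} (hv : HasDerivAt v dv x)
    {n : ℝ} (hn : 1 ≤ n) (hx : v x = 0) (hgood : 1 < n ∨ dv = 0) :
    HasDerivAt (fun y => |v y| ^ n) 0 x := by
  rw [hasDerivAt_iff_tendsto_slope]
  have habs : Tendsto (fun y => |slope v x y|) (nhdsWithin x ({x}ᶜ : Set ℝ)) (nhds |dv|) :=
    (hasDerivAt_iff_tendsto_slope.1 hv).abs
  have T1 : Tendsto (fun y => |slope v x y| ^ n) (nhdsWithin x ({x}ᶜ : Set ℝ))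
      (nhds (|dv| ^ n)) :=
    (Real.continuousAt_rpow_const _ n (Or.inr (by linarith))).tendsto.comp habs
  have T0 : Tendsto (fun y => |y - x|) (nhdsWithin x ({x}ᶜ : Set ℝ)) (nhds 0) := by
    have hc : Continuous fun y : ℝ => |y - x| :=
      continuous_abs.comp (continuous_id.sub continuous_const)
    have := (hc.tendsto x).mono_left (nhdsWithin_le_nhds (s := ({x}ᶜ : Set ℝ)))
    simpa using this
  have T2 : Tendsto (fun y => |y - x| ^ (n - 1)) (nhdsWithin x ({x}ᶜ : Set ℝ))
      (nhds ((0:ℝ) ^ (n - 1))) :=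
    (Real.continuousAt_rpow_const 0 (n - 1) (Or.inr (by linarith))).tendsto.comp T0
  have hT := T1.mul T2
  have hlim : |dv| ^ n * (0:ℝ) ^ (n - 1) = 0 := by
    rcases hgood with h | h
    · rw [Real.zero_rpow (by linarith : n - 1 ≠ 0), mul_zero]
    · rw [h, abs_zero, Real.zero_rpow (by linarith : n ≠ 0), zero_mul]
  rw [hlim] at hT
  refine squeeze_zero_norm' ?_ hT
  filter_upwards [self_mem_nhdsWithin] with y hy
  exact le_of_eq (abs_slope_abs_rpow_eq hx (by linarith) hy)

end RpowAux

section PsiAux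

/-- a one-sided derivative for the mobility along a curve -/
noncomputable def tfePsi (n z dz : ℝ) : ℝ :=
  if z = 0 then (if n = 1 then |dz| else 0)
  else n * |z| ^ (n - 1) * (if 0 < z then 1 else -1) * dz

lemma tfeF_hasDerivWithinAt {n ε : ℝ} (hn : 1 ≤ n) {v : ℝ → ℝ} {x dv : ℝ}
    (hv : HasDerivAt v dv x) :
    HasDerivWithinAt (fun y => tfeF n ε (v y)) (tfePsi n (v x) dv) (Ioi x) x := by
  show HasDerivWithinAt (fun y => |v y| ^ n + ε) _ _ _
  by_cases hx : v x = 0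
  · rw [tfePsi, if_pos hx]
    exact (hasDerivWithinAt_abs_rpow_zero hv hn hx).add_const ε
  · rw [tfePsi, if_neg hx]
    exact (((hasDerivAt_abs_rpow_of_ne hx).comp x hv).hasDerivWithinAt).add_const ε

lemma tfeF_hasDerivAt {n ε : ℝ} (hn : 1 ≤ n) {v : ℝ → ℝ} {x dv : ℝ}
    (hv : HasDerivAt v dv x) (hgood : v x ≠ 0 ∨ 1 < n ∨ dv = 0) :
    HasDerivAt (fun y => tfeF n ε (v y)) (tfePsi n (v x) dv) x := by
  show HasDerivAt (fun y => |v y| ^ n + ε) _ _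
  by_cases hx : v x = 0
  · rw [tfePsi, if_pos hx]
    have hg : 1 < n ∨ dv = 0 := hgood.resolve_left (by simpa using hx)
    have h0 := (hasDerivAt_abs_rpow_zero hv hn hx hg).add_const ε
    rcases hg with h | h
    · rwa [if_neg (by linarith : ¬ n = 1)]
    · have he : (if n = 1 then |dv| else 0) = 0 := by split_ifs <;> simp [h]
      rwa [he]
  · rw [tfePsi, if_neg hx]
    exact (((hasDerivAt_abs_rpow_of_ne hx).comp x hv)).add_const ε

lemma continuous_tfeF {n ε : ℝ} (hn : 0 ≤ n) : Continuous (fun z => tfeF n ε z) := by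
  apply Continuous.add ?_ continuous_const
  rw [continuous_iff_continuousAt]; intro z
  exact (Real.continuousAt_rpow_const _ n (Or.inr hn)).comp continuous_abs.continuousAt

lemma tfeF_nonneg {n ε z : ℝ} (hε : 0 ≤ ε) : 0 ≤ tfeF n ε z :=
  add_nonneg (Real.rpow_nonneg (abs_nonneg z) n) hε

lemma measurable_tfePsi_comp {n : ℝ} (hn : 1 ≤ n) {v v' : ℝ → ℝ}
    (hv : Continuous v) (hv' : Continuous v') :
    Measurable (fun x => tfePsi n (v x) (v' x)) := by
  unfold tfePsi
  have h0 : MeasurableSet {x | v x = 0} := hv.measurable (measurableSet_singleton 0)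
  apply Measurable.ite h0
  · by_cases h1 : n = 1 <;> simp only [h1, if_pos, if_neg, if_true, if_false]
    · exact (continuous_abs.comp hv').measurable
    · exact measurable_const
  · have hpos : MeasurableSet {x | 0 < v x} := hv.measurable measurableSet_Ioi
    have hc : Continuous fun x => n * |v x| ^ (n - 1) := by
      apply continuous_const.mul
      rw [continuous_iff_continuousAt]; intro z
      exact (Real.continuousAt_rpow_const _ (n-1) (Or.inr (by linarith))).comp
        (continuous_abs.comp hv).continuousAt
    exact ((hc.measurable.mul (Measurable.ite hpos measurable_const measurable_const)).mul
      hv'.measurable)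

lemma abs_tfePsi_le {n : ℝ} (hn : 1 ≤ n) (z dz : ℝ) :
    |tfePsi n z dz| ≤ (1 + n * (1 + |z|) ^ n) * (1 + |dz|) := by
  have hp : (0:ℝ) < (1 + |z|) ^ n := Real.rpow_pos_of_pos (by positivity) n
  have hA : 1 ≤ 1 + n * (1 + |z|) ^ n := by nlinarith
  unfold tfePsi
  by_cases h : z = 0
  · rw [if_pos h]
    by_cases h1 : n = 1
    · rw [if_pos h1, abs_abs]
      calc |dz| ≤ 1 + |dz| := by linarith
        _ ≤ _ := le_mul_of_one_le_left (by positivity) hA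
    · rw [if_neg h1]
      simp only [abs_zero]
      positivity
  · rw [if_neg h]
    have h2 : |z| ^ (n-1) ≤ (1+|z|) ^ n := by
      calc |z| ^ (n-1) ≤ (1+|z|) ^ (n-1) :=
        Real.rpow_le_rpow (abs_nonneg z) (by linarith) (by linarith)
      _ ≤ (1+|z|) ^ n := Real.rpow_le_rpow_of_exponent_le (by linarith [abs_nonneg z]) (by linarith)
    have habs : |n * |z| ^ (n-1) * (if 0 < z then (1:ℝ) else -1) * dz|
        = n * |z| ^ (n-1) * |dz| := by
      rw [abs_mul, abs_mul, abs_mul]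
      have hi : |if 0 < z then (1:ℝ) else -1| = 1 := by split_ifs <;> norm_num
      rw [hi, abs_of_nonneg (by linarith : (0:ℝ) ≤ n),
        abs_of_nonneg (Real.rpow_nonneg (abs_nonneg z) _), mul_one]
    rw [habs]
    have h3 : (0:ℝ) ≤ |z| ^ (n-1) := Real.rpow_nonneg (abs_nonneg z) _
    calc n * |z| ^ (n-1) * |dz| ≤ n * (1+|z|) ^ n * |dz| := by
          have := mul_le_mul_of_nonneg_left h2 (by linarith : (0:ℝ) ≤ n)
          exact mul_le_mul_of_nonneg_right this (abs_nonneg dz)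
      _ ≤ (1 + n * (1+|z|) ^ n) * (1 + |dz|) := by nlinarith [abs_nonneg dz]

lemma countable_of_isolated' {s : Set ℝ}
    (h : ∀ x ∈ s, ∃ r > 0, ∀ y ∈ s, |y - x| < r → y = x) : s.Countable := by
  choose! r hr0 hr using h
  have hd : s.PairwiseDisjoint (fun x => Metric.ball x (r x / 2)) := by
    intro x hx y hy hxy
    apply Metric.ball_disjoint_ball
    have h1 : r x ≤ |y - x| := le_of_not_gt fun c => hxy (hr x hx y hy c).symm
    have h2 : r y ≤ |x - y| := le_of_not_gt fun c => hxy (hr y hy x hx c)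
    rw [dist_comm, Real.dist_eq]
    rw [abs_sub_comm] at h2
    linarith [max_le h1 h2, le_max_left (r x) (r y), le_max_right (r x) (r y)]
  exact hd.countable_of_isOpen (fun x _ => Metric.isOpen_ball)
    (fun x hx => Metric.nonempty_ball.2 (by linarith [hr0 x hx]))

lemma eventually_nhdsWithin_ball {x : ℝ} {s : Set ℝ} {p : ℝ → Prop}
    (h : ∀ᶠ y in nhdsWithin x s, p y) : ∃ r > 0, ∀ y ∈ s, |y - x| < r → p y := by
  rw [eventually_nhdsWithin_iff, Metric.eventually_nhds_iff] at h
  obtain ⟨r, hr, h⟩ := h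
  exact ⟨r, hr, fun y hy hyr => h (by simpa [Real.dist_eq] using hyr) hy⟩

end PsiAux

section FubiniAux

lemma fubini_prod_integrable {H : ℝ × ℝ → ℝ} (hH : Continuous H) (t : ℝ) :
    Integrable H ((volume.restrict (Set.Ioc (0:ℝ) 1)).prod (volume.restrict (Set.Ioc 0 t))) := by
  rw [Measure.prod_restrict]
  exact (hH.continuousOn.integrableOn_compact (isCompact_Icc.prod isCompact_Icc)).mono_set
    (Set.prod_mono Set.Ioc_subset_Icc_self Set.Ioc_subset_Icc_self)

lemma fubini_helper {H : ℝ × ℝ → ℝ} (hH : Continuous H) {t : ℝ} (ht : 0 ≤ t) :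
    ∫ s in (0:ℝ)..1, (∫ σ in (0:ℝ)..t, H (s, σ))
      = ∫ σ in (0:ℝ)..t, (∫ s in (0:ℝ)..1, H (s, σ)) := by
  have hint : Integrable (Function.uncurry fun s σ => H (s, σ))
      ((volume.restrict (Set.Ioc (0:ℝ) 1)).prod (volume.restrict (Set.Ioc 0 t))) :=
    fubini_prod_integrable hH t
  have hsw := MeasureTheory.integral_integral_swap hint
  simp only [intervalIntegral.integral_of_le, zero_le_one, ht]
  exact hsw

lemma fubini_integrable {H : ℝ × ℝ → ℝ} (hH : Continuous H) {t : ℝ} (ht : 0 ≤ t) :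
    IntervalIntegrable (fun σ => ∫ s in (0:ℝ)..1, H (s, σ)) volume 0 t := by
  have hint : Integrable (Function.uncurry fun s σ => H (s, σ))
      ((volume.restrict (Set.Ioc (0:ℝ) 1)).prod (volume.restrict (Set.Ioc 0 t))) :=
    fubini_prod_integrable hH t
  have h2 := hint.integral_prod_right
  rw [intervalIntegrable_iff_integrableOn_Ioc_of_le ht]
  simpa [intervalIntegral.integral_of_le zero_le_one, IntegrableOn] using h2

end FubiniAux

section EdgeKey

/-- boundary flux expression at an endpoint -/
noncomputable def edgeX (n ε : ℝ) (F : ℝ × ℝ → ℝ) (s₀ σ : ℝ) : ℝ :=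
  pds F (s₀, σ) * pdt F (s₀, σ)
    + (-(pds (pds F) (s₀, σ))) * (tfeF n ε (F (s₀, σ)) * (-(pds (pds (pds F)) (s₀, σ))))

lemma edge_key {n ε : ℝ} (hn : 1 ≤ n) (hε : 0 < ε) (F : ℝ × ℝ → ℝ)
    (hF : ContDiff ℝ 4 F) (σ : ℝ)
    (hpde : ∀ s ∈ Icc (0:ℝ) 1,
        pdt F (s, σ)
          = deriv (fun x => tfeF n ε (F (x, σ)) * (-(pds (pds (pds F)) (x, σ)))) s) :
    ∫ s in (0:ℝ)..1, pds F (s, σ) * pdt (pds F) (s, σ)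
      = (edgeX n ε F 1 σ - edgeX n ε F 0 σ)
        - ∫ s in (0:ℝ)..1, tfeF n ε (F (s, σ)) * (pds (pds (pds F)) (s, σ))^2 := by
  have hn0 : (0:ℝ) ≤ n := by linarith
  have hF3 : ContDiff ℝ 3 (pds F) := contDiff_pds hF (by norm_num)
  have hF2 : ContDiff ℝ 2 (pds (pds F)) := contDiff_pds hF3 (by norm_num)
  have hF1 : ContDiff ℝ 1 (pds (pds (pds F))) := contDiff_pds hF2 (by norm_num)
  have hF0 : Continuous (pds (pds (pds (pds F)))) := (contDiff_pds (k := 0) hF1 (by norm_num)).continuous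
  have hQ3 : ContDiff ℝ 3 (pdt F) := contDiff_pdt hF (by norm_num)
  have hQs2 : ContDiff ℝ 2 (pds (pdt F)) := contDiff_pds hQ3 (by norm_num)
  have hsec : Continuous (fun x : ℝ => (x, σ)) := continuous_id.prodMk continuous_const
  have hVc : Continuous (fun x => F (x, σ)) := hF.continuous.comp hsec
  have hP1c : Continuous (fun x => pds F (x, σ)) := hF3.continuous.comp hsec
  have hP2c : Continuous (fun x => pds (pds F) (x, σ)) := hF2.continuous.comp hsec
  have hP3c : Continuous (fun x => pds (pds (pds F)) (x, σ)) := hF1.continuous.comp hsec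
  have hP4c : Continuous (fun x => pds (pds (pds (pds F))) (x, σ)) := hF0.comp hsec
  have hQc : Continuous (fun x => pdt F (x, σ)) := hQ3.continuous.comp hsec
  have hQsc : Continuous (fun x => pds (pdt F) (x, σ)) := hQs2.continuous.comp hsec
  have hVd : ∀ x : ℝ, HasDerivAt (fun x' => F (x', σ)) (pds F (x, σ)) x :=
    fun x => hasDerivAt_pds hF (by norm_num) x σ
  have hWd : ∀ x : ℝ, HasDerivAt (fun x' => -(pds (pds (pds F)) (x', σ)))
      (-(pds (pds (pds (pds F))) (x, σ))) x :=
    fun x => (hasDerivAt_pds hF1 le_rfl x σ).neg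
  have hgc : Continuous (fun x => tfeF n ε (F (x, σ)) * (-(pds (pds (pds F)) (x, σ)))) :=
    ((continuous_tfeF hn0).comp hVc).mul hP3c.neg
  have hgW : ∀ x : ℝ, HasDerivWithinAt
      (fun x' => tfeF n ε (F (x', σ)) * (-(pds (pds (pds F)) (x', σ))))
      (tfePsi n (F (x, σ)) (pds F (x, σ)) * (-(pds (pds (pds F)) (x, σ)))
        + tfeF n ε (F (x, σ)) * (-(pds (pds (pds (pds F))) (x, σ)))) (Ioi x) x :=
    fun x => (tfeF_hasDerivWithinAt hn (hVd x)).mul (hWd x).hasDerivWithinAt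
  have hgA : ∀ x : ℝ, (F (x, σ) ≠ 0 ∨ pds F (x, σ) = 0) → HasDerivAt
      (fun x' => tfeF n ε (F (x', σ)) * (-(pds (pds (pds F)) (x', σ))))
      (tfePsi n (F (x, σ)) (pds F (x, σ)) * (-(pds (pds (pds F)) (x, σ)))
        + tfeF n ε (F (x, σ)) * (-(pds (pds (pds (pds F))) (x, σ)))) x := by
    intro x hx
    refine (tfeF_hasDerivAt hn (hVd x) ?_).mul (hWd x)
    rcases hx with h | h
    exacts [Or.inl h, Or.inr (Or.inr h)]
  have hBcnt : Set.Countable {x : ℝ | F (x, σ) = 0 ∧ pds F (x, σ) ≠ 0} := by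
    apply countable_of_isolated'
    rintro x ⟨hx0, hxd⟩
    have hne : ∀ᶠ y in nhdsWithin x ({x}ᶜ : Set ℝ), slope (fun x' => F (x', σ)) x y ≠ 0 :=
      (hasDerivAt_iff_tendsto_slope.1 (hVd x)).eventually_ne hxd
    obtain ⟨r, hr, h⟩ := eventually_nhdsWithin_ball hne
    refine ⟨r, hr, fun y hy hyr => ?_⟩
    by_contra hne'
    refine h y (by simpa using hne') hyr ?_
    rw [slope_def_field, hy.1, hx0]
    simp
  have hae : ∀ᵐ x : ℝ, x ∉ {x : ℝ | F (x, σ) = 0 ∧ pds F (x, σ) ≠ 0} := by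
    rw [MeasureTheory.ae_iff]
    simpa using hBcnt.measure_zero volume
  have hψmeas : Measurable (fun x => tfePsi n (F (x, σ)) (pds F (x, σ))) :=
    measurable_tfePsi_comp hn hVc hP1c
  have hbc : Continuous (fun x => (1 + n * (1 + |F (x, σ)|) ^ n) * (1 + |pds F (x, σ)|)) := by
    apply Continuous.mul
    · apply continuous_const.add (continuous_const.mul ?_)
      rw [continuous_iff_continuousAt]; intro z
      exact (Real.continuousAt_rpow_const _ n (Or.inr hn0)).comp
        (continuous_const.add (continuous_abs.comp hVc)).continuousAt
    · exact continuous_const.add (continuous_abs.comp hP1c)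
  have hψint : IntervalIntegrable (fun x => tfePsi n (F (x, σ)) (pds F (x, σ))) volume 0 1 := by
    apply (hbc.intervalIntegrable 0 1).mono_fun hψmeas.aestronglyMeasurable
    filter_upwards with x
    rw [Real.norm_eq_abs, Real.norm_eq_abs]
    exact (abs_tfePsi_le hn _ _).trans (le_abs_self _)
  have hg'int : IntervalIntegrable (fun x => tfePsi n (F (x, σ)) (pds F (x, σ))
      * (-(pds (pds (pds F)) (x, σ)))
      + tfeF n ε (F (x, σ)) * (-(pds (pds (pds (pds F))) (x, σ)))) volume 0 1 :=
    (hψint.mul_continuousOn hP3c.neg.continuousOn).add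
      ((((continuous_tfeF hn0).comp hVc).mul hP4c.neg).intervalIntegrable 0 1)
  -- Fundamental theorem of calculus for the flux
  have hgG : ∀ s ∈ Icc (0:ℝ) 1,
      tfeF n ε (F (s, σ)) * (-(pds (pds (pds F)) (s, σ)))
        = tfeF n ε (F (0, σ)) * (-(pds (pds (pds F)) (0, σ)))
          + ∫ x in (0:ℝ)..s, pdt F (x, σ) := by
    intro s hs
    have hsub : Set.uIcc (0:ℝ) s ⊆ Set.uIcc (0:ℝ) 1 := by
      rw [Set.uIcc_of_le hs.1, Set.uIcc_of_le zero_le_one]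
      exact Set.Icc_subset_Icc le_rfl hs.2
    have h1 := integral_eq_sub_of_hasDeriv_right_of_le hs.1
      (hgc.continuousOn
        : ContinuousOn (fun x' => tfeF n ε (F (x', σ)) * (-(pds (pds (pds F)) (x', σ)))) _)
      (fun x _ => hgW x) (hg'int.mono_set hsub)
    have h2 : (∫ x in (0:ℝ)..s, (tfePsi n (F (x, σ)) (pds F (x, σ))
        * (-(pds (pds (pds F)) (x, σ)))
        + tfeF n ε (F (x, σ)) * (-(pds (pds (pds (pds F))) (x, σ)))))
        = ∫ x in (0:ℝ)..s, pdt F (x, σ) := by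
      rw [intervalIntegral.integral_of_le hs.1, intervalIntegral.integral_of_le hs.1]
      apply MeasureTheory.setIntegral_congr_ae measurableSet_Ioc
      filter_upwards [hae] with x hxB hxI
      have hgood : F (x, σ) ≠ 0 ∨ pds F (x, σ) = 0 := by
        by_contra hc
        push_neg at hc
        exact hxB ⟨hc.1, hc.2⟩
      have hx1 : x ∈ Icc (0:ℝ) 1 := ⟨hxI.1.le, hxI.2.trans hs.2⟩
      rw [← (hgA x hgood).deriv]
      exact (hpde x hx1).symm
    rw [h2] at h1
    linarith
  -- the primitive of `pdt F (·, σ)`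
  have hGd : ∀ s : ℝ, HasDerivAt (fun r => tfeF n ε (F (0, σ)) * (-(pds (pds (pds F)) (0, σ)))
      + ∫ x in (0:ℝ)..r, pdt F (x, σ)) (pdt F (s, σ)) s := by
    intro s
    exact ((hQc.integral_hasStrictDerivAt 0 s).hasDerivAt).const_add _
  have hGc : Continuous (fun r : ℝ => tfeF n ε (F (0, σ)) * (-(pds (pds (pds F)) (0, σ)))
      + ∫ x in (0:ℝ)..r, pdt F (x, σ)) := by
    apply continuous_const.add
    exact intervalIntegral.continuous_primitive (fun a b => hQc.intervalIntegrable a b) 0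
  -- second integration by parts
  have IBP2 := intervalIntegral.integral_mul_deriv_eq_deriv_mul
    (u := fun s => -(pds (pds F) (s, σ))) (u' := fun s => -(pds (pds (pds F)) (s, σ)))
    (v := fun r => tfeF n ε (F (0, σ)) * (-(pds (pds (pds F)) (0, σ)))
      + ∫ x in (0:ℝ)..r, pdt F (x, σ)) (v' := fun s => pdt F (s, σ)) (a := 0) (b := 1)
    (fun x _ => (hasDerivAt_pds hF2 (by norm_num) x σ).neg)
    (fun x _ => hGd x)
    (hP3c.neg.intervalIntegrable 0 1) (hQc.intervalIntegrable 0 1)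
  -- first integration by parts
  have IBP1 := intervalIntegral.integral_mul_deriv_eq_deriv_mul
    (u := fun s => pds F (s, σ)) (u' := fun s => pds (pds F) (s, σ))
    (v := fun s => pdt F (s, σ)) (v' := fun s => pds (pdt F) (s, σ)) (a := 0) (b := 1)
    (fun x _ => hasDerivAt_pds hF3 (by norm_num) x σ)
    (fun x _ => hasDerivAt_pds hQ3 (by norm_num) x σ)
    (hP2c.intervalIntegrable 0 1) (hQsc.intervalIntegrable 0 1)
  -- rewrite mixed partials
  have hmix : ∫ s in (0:ℝ)..1, pds F (s, σ) * pdt (pds F) (s, σ)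
      = ∫ s in (0:ℝ)..1, pds F (s, σ) * pds (pdt F) (s, σ) := by
    apply intervalIntegral.integral_congr
    intro x _
    rw [pdt_pds_comm (hF.of_le (by norm_num))]
  -- replace the primitive by the flux inside IBP2
  have hG1 : (tfeF n ε (F (0, σ)) * (-(pds (pds (pds F)) (0, σ)))
      + ∫ x in (0:ℝ)..(1:ℝ), pdt F (x, σ)) = tfeF n ε (F (1, σ)) * (-(pds (pds (pds F)) (1, σ))) :=
    (hgG 1 ⟨zero_le_one, le_rfl⟩).symm
  have hG0 : (tfeF n ε (F (0, σ)) * (-(pds (pds (pds F)) (0, σ)))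
      + ∫ x in (0:ℝ)..(0:ℝ), pdt F (x, σ)) = tfeF n ε (F (0, σ)) * (-(pds (pds (pds F)) (0, σ))) := by
    simp
  have hIG : ∫ s in (0:ℝ)..1, (-(pds (pds (pds F)) (s, σ)))
      * (tfeF n ε (F (0, σ)) * (-(pds (pds (pds F)) (0, σ))) + ∫ x in (0:ℝ)..s, pdt F (x, σ))
      = ∫ s in (0:ℝ)..1, tfeF n ε (F (s, σ)) * (pds (pds (pds F)) (s, σ))^2 := by
    apply intervalIntegral.integral_congr
    intro r hr
    rw [Set.uIcc_of_le zero_le_one] at hr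
    dsimp only
    rw [← hgG r hr]
    ring
  rw [hG1, hG0, hIG] at IBP2
  -- IBP2 : ∫ (-(P2)) * Q = (-(P2 1)) * (tfeF * (-P3 1)) - (-(P2 0)) * (tfeF * (-P3 0)) - ∫ tfeF * P3^2
  have hsplit : ∫ s in (0:ℝ)..1, pds (pds F) (s, σ) * pdt F (s, σ)
      = -∫ s in (0:ℝ)..1, (-(pds (pds F) (s, σ))) * pdt F (s, σ) := by
    rw [← intervalIntegral.integral_neg]
    apply intervalIntegral.integral_congr
    intro x _
    ring
  rw [hmix, IBP1, hsplit, IBP2]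
  unfold edgeX
  ring

section EdgeMain

lemma edge_main {n ε : ℝ} (hn : 1 ≤ n) (hε : 0 < ε) (F : ℝ × ℝ → ℝ) (hF : ContDiff ℝ 4 F)
    {t : ℝ} (ht : 0 ≤ t)
    (hpde : ∀ σ ∈ Icc (0:ℝ) t, ∀ s ∈ Icc (0:ℝ) 1,
        pdt F (s, σ) = deriv (fun x => tfeF n ε (F (x, σ)) * (-(pds (pds (pds F)) (x, σ)))) s) :
    (∫ s in (0:ℝ)..1, (pds F (s, t))^2)
      + 2 * (∫ σ in (0:ℝ)..t, ∫ s in (0:ℝ)..1,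
          tfeF n ε (F (s, σ)) * (pds (pds (pds F)) (s, σ))^2)
    = (∫ s in (0:ℝ)..1, (pds F (s, 0))^2)
      + 2 * (∫ σ in (0:ℝ)..t, (edgeX n ε F 1 σ - edgeX n ε F 0 σ)) := by
  have hn0 : (0:ℝ) ≤ n := by linarith
  have h3 : ContDiff ℝ 3 (pds F) := contDiff_pds hF (by norm_num)
  have h2 : ContDiff ℝ 2 (pds (pds F)) := contDiff_pds h3 (by norm_num)
  have h1 : ContDiff ℝ 1 (pds (pds (pds F))) := contDiff_pds h2 (by norm_num)
  have hq3 : ContDiff ℝ 3 (pdt F) := contDiff_pdt hF (by norm_num)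
  have hq2 : ContDiff ℝ 2 (pdt (pds F)) := contDiff_pdt h3 (by norm_num)
  have hH : Continuous (fun p : ℝ × ℝ => 2 * (pds F p * pdt (pds F) p)) :=
    continuous_const.mul (h3.continuous.mul hq2.continuous)
  have hQH : Continuous (fun p : ℝ × ℝ => tfeF n ε (F p) * (pds (pds (pds F)) p)^2) :=
    ((continuous_tfeF hn0).comp hF.continuous).mul (h1.continuous.pow 2)
  have hsqt : Continuous (fun s => (pds F (s, t))^2) :=
    (h3.continuous.comp (continuous_id.prodMk continuous_const)).pow 2
  have hsq0 : Continuous (fun s => (pds F (s, 0))^2) :=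
    (h3.continuous.comp (continuous_id.prodMk continuous_const)).pow 2
  have e2 : ∀ s : ℝ, (pds F (s, t))^2 - (pds F (s, 0))^2
      = ∫ σ in (0:ℝ)..t, 2 * (pds F (s, σ) * pdt (pds F) (s, σ)) := by
    intro s
    have hder : ∀ σ' ∈ Set.uIcc (0:ℝ) t, HasDerivAt (fun τ => (pds F (s, τ))^2)
        (2 * (pds F (s, σ') * pdt (pds F) (s, σ'))) σ' := by
      intro σ' _
      have h := (hasDerivAt_pdt h3 (by norm_num) s σ').fun_pow 2
      refine h.congr_deriv ?_
      ring
    have hic : Continuous (fun σ' => 2 * (pds F (s, σ') * pdt (pds F) (s, σ'))) := by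
      have hsec : Continuous (fun σ' : ℝ => (s, σ')) := continuous_const.prodMk continuous_id
      exact continuous_const.mul ((h3.continuous.comp hsec).mul (hq2.continuous.comp hsec))
    rw [intervalIntegral.integral_eq_sub_of_hasDerivAt hder (hic.intervalIntegrable 0 t)]
  have e3 : (∫ s in (0:ℝ)..1, (pds F (s, t))^2) - (∫ s in (0:ℝ)..1, (pds F (s, 0))^2)
      = ∫ s in (0:ℝ)..1, ∫ σ in (0:ℝ)..t, 2 * (pds F (s, σ) * pdt (pds F) (s, σ)) := by
    rw [← intervalIntegral.integral_sub (hsqt.intervalIntegrable 0 1)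
      (hsq0.intervalIntegrable 0 1)]
    exact intervalIntegral.integral_congr (fun s _ => e2 s)
  have e4 : (∫ s in (0:ℝ)..1, ∫ σ in (0:ℝ)..t, 2 * (pds F (s, σ) * pdt (pds F) (s, σ)))
      = ∫ σ in (0:ℝ)..t, ∫ s in (0:ℝ)..1, 2 * (pds F (s, σ) * pdt (pds F) (s, σ)) :=
    fubini_helper hH ht
  have e5 : ∀ σ' ∈ Set.uIcc (0:ℝ) t,
      (∫ s in (0:ℝ)..1, 2 * (pds F (s, σ') * pdt (pds F) (s, σ')))
        = 2 * (edgeX n ε F 1 σ' - edgeX n ε F 0 σ')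
          - 2 * (∫ s in (0:ℝ)..1, tfeF n ε (F (s, σ')) * (pds (pds (pds F)) (s, σ'))^2) := by
    intro σ' hσ'
    rw [Set.uIcc_of_le ht] at hσ'
    have hK := edge_key hn hε F hF σ' (hpde σ' hσ')
    rw [intervalIntegral.integral_const_mul, hK]
    ring
  have e6 : (∫ σ in (0:ℝ)..t, ∫ s in (0:ℝ)..1, 2 * (pds F (s, σ) * pdt (pds F) (s, σ)))
      = ∫ σ in (0:ℝ)..t, (2 * (edgeX n ε F 1 σ - edgeX n ε F 0 σ)
          - 2 * (∫ s in (0:ℝ)..1, tfeF n ε (F (s, σ)) * (pds (pds (pds F)) (s, σ))^2)) :=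
    intervalIntegral.integral_congr e5
  have hXc1 : Continuous (fun σ => edgeX n ε F 1 σ - edgeX n ε F 0 σ) := by
    have hsec : ∀ s₀ : ℝ, Continuous (fun σ' : ℝ => (s₀, σ')) :=
      fun s₀ => continuous_const.prodMk continuous_id
    have hX : ∀ s₀ : ℝ, Continuous (fun σ => edgeX n ε F s₀ σ) := by
      intro s₀
      unfold edgeX
      exact ((h3.continuous.comp (hsec s₀)).mul (hq3.continuous.comp (hsec s₀))).add
        (((h2.continuous.comp (hsec s₀)).neg).mul
          (((continuous_tfeF hn0).comp (hF.continuous.comp (hsec s₀))).mul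
            ((h1.continuous.comp (hsec s₀)).neg)))
    exact (hX 1).sub (hX 0)
  have hQint : IntervalIntegrable
      (fun σ => ∫ s in (0:ℝ)..1, tfeF n ε (F (s, σ)) * (pds (pds (pds F)) (s, σ))^2)
      volume 0 t := fubini_integrable hQH ht
  have e7 : (∫ σ in (0:ℝ)..t, (2 * (edgeX n ε F 1 σ - edgeX n ε F 0 σ)
        - 2 * (∫ s in (0:ℝ)..1, tfeF n ε (F (s, σ)) * (pds (pds (pds F)) (s, σ))^2)))
      = 2 * (∫ σ in (0:ℝ)..t, (edgeX n ε F 1 σ - edgeX n ε F 0 σ))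
        - 2 * (∫ σ in (0:ℝ)..t, ∫ s in (0:ℝ)..1,
            tfeF n ε (F (s, σ)) * (pds (pds (pds F)) (s, σ))^2) := by
    rw [intervalIntegral.integral_sub ((hXc1.intervalIntegrable 0 t).const_mul 2)
      (hQint.const_mul 2), intervalIntegral.integral_const_mul,
      intervalIntegral.integral_const_mul]
  linarith [e3, e4, e6, e7]

end EdgeMain

/-- the energy identity and energy dissipation for classical solutions of the
regularized thin-film system on a graph. -/
theorem energy_identity {l m : ℕ} (hl : 1 ≤ l) (hm : 1 ≤ m)
    (n ε T : ℝ) (hn : 1 ≤ n) (hε : 0 < ε) (hT : 0 < T)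
    (tl hd : Fin l → Fin m) (bdry : Set (Fin m)) (u : Fin l → ℝ → ℝ → ℝ)
    (hu : IsGraphTFESolution n ε T tl hd bdry u) :
    (∀ t ∈ Icc (0:ℝ) T,
      (1 / 2) * ∑ j : Fin l, (∫ s in (0:ℝ)..1, (deriv (fun x => u j x t) s) ^ 2)
        + ∑ j : Fin l, (∫ σ in (0:ℝ)..t, ∫ s in (0:ℝ)..1,
            tfeF n ε (u j s σ) * (deriv (fun x => tfeW (u j) x σ) s) ^ 2)
      = (1 / 2) * ∑ j : Fin l, (∫ s in (0:ℝ)..1, (deriv (fun x => u j x 0) s) ^ 2)) ∧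
    (∀ t₁ ∈ Icc (0:ℝ) T, ∀ t₂ ∈ Icc (0:ℝ) T, t₁ ≤ t₂ →
      (1 / 2) * ∑ j : Fin l, (∫ s in (0:ℝ)..1, (deriv (fun x => u j x t₂) s) ^ 2)
        ≤ (1 / 2) * ∑ j : Fin l, (∫ s in (0:ℝ)..1, (deriv (fun x => u j x t₁) s) ^ 2)) := by
    classical
  have hF : ∀ j, ContDiff ℝ 4 (ucr (u j)) := fun j => hu.smooth j
  have hn0 : (0:ℝ) ≤ n := by linarith
  -- statement-form dissipation equals pds-form dissipation
  have hDD : ∀ (j : Fin l) (t : ℝ),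
      (∫ σ in (0:ℝ)..t, ∫ s in (0:ℝ)..1,
          tfeF n ε (u j s σ) * (deriv (fun x => tfeW (u j) x σ) s) ^ 2)
        = ∫ σ in (0:ℝ)..t, ∫ s in (0:ℝ)..1,
            tfeF n ε (ucr (u j) (s, σ)) * (pds (pds (pds (ucr (u j)))) (s, σ))^2 := by
    intro j t
    apply intervalIntegral.integral_congr
    intro σ _
    apply intervalIntegral.integral_congr
    intro s _
    dsimp only
    rw [bridge_ws (hF j), neg_sq]
    rfl
  have e1 : ∀ (j : Fin l) (τ : ℝ), (∫ s in (0:ℝ)..1, (deriv (fun x => u j x τ) s) ^ 2)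
      = ∫ s in (0:ℝ)..1, (pds (ucr (u j)) (s, τ))^2 := by
    intro j τ
    apply intervalIntegral.integral_congr
    intro s _
    dsimp only
    rw [bridge_us (hF j)]
  -- the pde in pds-language
  have hpdeP : ∀ (j : Fin l) (t : ℝ), t ∈ Icc (0:ℝ) T → ∀ σ ∈ Icc (0:ℝ) t, ∀ s ∈ Icc (0:ℝ) 1,
      pdt (ucr (u j)) (s, σ)
        = deriv (fun x => tfeF n ε (ucr (u j) (x, σ))
            * (-(pds (pds (pds (ucr (u j)))) (x, σ)))) s := by
    intro j t htT σ hσ s hs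
    have hσT : σ ∈ Icc (0:ℝ) T := ⟨hσ.1, hσ.2.trans htT.2⟩
    have h0 := hu.pde j s hs σ hσT
    rw [bridge_ut (hF j)] at h0
    rw [show (fun x => tfeF n ε (u j x σ) * deriv (fun y => tfeW (u j) y σ) x)
        = (fun x => tfeF n ε (ucr (u j) (x, σ)) * (-(pds (pds (pds (ucr (u j)))) (x, σ))))
      from funext fun x => by rw [bridge_ws (hF j)]; rfl] at h0
    exact h0
  -- integrability of the boundary expression
  have hXc : ∀ (j : Fin l) (s₀ : ℝ), Continuous (fun σ => edgeX n ε (ucr (u j)) s₀ σ) := by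
    intro j s₀
    have hsec : Continuous (fun σ' : ℝ => (s₀, σ')) := continuous_const.prodMk continuous_id
    have h3 : ContDiff ℝ 3 (pds (ucr (u j))) := contDiff_pds (hF j) (by norm_num)
    have h2 : ContDiff ℝ 2 (pds (pds (ucr (u j)))) := contDiff_pds h3 (by norm_num)
    have h1 : ContDiff ℝ 1 (pds (pds (pds (ucr (u j))))) := contDiff_pds h2 (by norm_num)
    have hq3 : ContDiff ℝ 3 (pdt (ucr (u j))) := contDiff_pdt (hF j) (by norm_num)
    unfold edgeX
    exact ((h3.continuous.comp hsec).mul (hq3.continuous.comp hsec)).add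
      (((h2.continuous.comp hsec).neg).mul
        (((continuous_tfeF hn0).comp ((hF j).continuous.comp hsec)).mul
          ((h1.continuous.comp hsec).neg)))
  -- vanishing of the summed boundary terms
  have ZERO : ∀ t ∈ Icc (0:ℝ) T,
      (∑ j : Fin l, ∫ σ in (0:ℝ)..t,
        (edgeX n ε (ucr (u j)) 1 σ - edgeX n ε (ucr (u j)) 0 σ)) = 0 := by
    intro t ht
    have hvanish : ∀ σ ∈ Ioo (0:ℝ) T,
        (∑ j : Fin l, (edgeX n ε (ucr (u j)) 1 σ - edgeX n ε (ucr (u j)) 0 σ)) = 0 := by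
      intro σ hσ
      have hσIcc : σ ∈ Icc (0:ℝ) T := ⟨hσ.1.le, hσ.2.le⟩
      have hUt : ∀ (j i : Fin l) (c d : ℝ), (∀ τ ∈ Icc (0:ℝ) T, u j c τ = u i d τ) →
          pdt (ucr (u j)) (c, σ) = pdt (ucr (u i)) (d, σ) := by
        intro j i c d hcd
        have hev : (fun τ => u j c τ) =ᶠ[nhds σ] (fun τ => u i d τ) := by
          filter_upwards [Ioo_mem_nhds hσ.1 hσ.2] with τ hτ
          exact hcd τ ⟨hτ.1.le, hτ.2.le⟩
        rw [← bridge_ut (hF j), ← bridge_ut (hF i)]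
        exact hev.deriv_eq
      rw [Finset.sum_sub_distrib,
        ← Finset.sum_fiberwise Finset.univ hd (fun j => edgeX n ε (ucr (u j)) 1 σ),
        ← Finset.sum_fiberwise Finset.univ tl (fun i => edgeX n ε (ucr (u i)) 0 σ),
        ← Finset.sum_sub_distrib]
      apply Finset.sum_eq_zero
      intro a _
      by_cases ha : a ∈ bdry
      · have hhead : ∀ j ∈ Finset.univ.filter (fun j => hd j = a),
            edgeX n ε (ucr (u j)) 1 σ = 0 := by
          intro j hj
          obtain ⟨h1, h2⟩ := hu.bdry_head a ha σ hσIcc j (Finset.mem_filter.1 hj).2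
          rw [bridge_us (hF j)] at h1
          rw [bridge_ws (hF j)] at h2
          unfold edgeX
          rw [h1, neg_eq_zero.1 h2]
          ring
        have htail : ∀ i ∈ Finset.univ.filter (fun i => tl i = a),
            edgeX n ε (ucr (u i)) 0 σ = 0 := by
          intro i hi
          obtain ⟨h1, h2⟩ := hu.bdry_tail a ha σ hσIcc i (Finset.mem_filter.1 hi).2
          rw [bridge_us (hF i)] at h1
          rw [bridge_ws (hF i)] at h2
          unfold edgeX
          rw [h1, neg_eq_zero.1 h2]
          ring
        rw [Finset.sum_eq_zero hhead, Finset.sum_eq_zero htail, sub_zero]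
      · -- interior vertex
        have hku : ∑ j ∈ Finset.univ.filter (fun j => hd j = a), pds (ucr (u j)) (1, σ)
            = ∑ i ∈ Finset.univ.filter (fun i => tl i = a), pds (ucr (u i)) (0, σ) := by
          calc ∑ j ∈ Finset.univ.filter (fun j => hd j = a), pds (ucr (u j)) (1, σ)
              = ∑ j ∈ Finset.univ.filter (fun j => hd j = a), deriv (fun x => u j x σ) 1 :=
                Finset.sum_congr rfl (fun j _ => (bridge_us (hF j) 1 σ).symm)
            _ = ∑ i ∈ Finset.univ.filter (fun i => tl i = a), deriv (fun x => u i x σ) 0 :=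
                hu.kirchhoff_u a ha σ hσIcc
            _ = ∑ i ∈ Finset.univ.filter (fun i => tl i = a), pds (ucr (u i)) (0, σ) :=
                Finset.sum_congr rfl (fun i _ => bridge_us (hF i) 0 σ)
        have hkw : ∑ j ∈ Finset.univ.filter (fun j => hd j = a),
              (-(pds (pds (pds (ucr (u j)))) (1, σ)))
            = ∑ i ∈ Finset.univ.filter (fun i => tl i = a),
              (-(pds (pds (pds (ucr (u i)))) (0, σ))) := by
          calc ∑ j ∈ Finset.univ.filter (fun j => hd j = a),
                (-(pds (pds (pds (ucr (u j)))) (1, σ)))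
              = ∑ j ∈ Finset.univ.filter (fun j => hd j = a),
                deriv (fun x => tfeW (u j) x σ) 1 :=
                Finset.sum_congr rfl (fun j _ => (bridge_ws (hF j) 1 σ).symm)
            _ = ∑ i ∈ Finset.univ.filter (fun i => tl i = a),
                deriv (fun x => tfeW (u i) x σ) 0 := hu.kirchhoff_w a ha σ hσIcc
            _ = ∑ i ∈ Finset.univ.filter (fun i => tl i = a),
                (-(pds (pds (pds (ucr (u i)))) (0, σ))) :=
                Finset.sum_congr rfl (fun i _ => bridge_ws (hF i) 0 σ)
        rcases (Finset.univ.filter (fun j => hd j = a)).eq_empty_or_nonempty with hH | hH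
        · rcases (Finset.univ.filter (fun i => tl i = a)).eq_empty_or_nonempty with hT' | hT'
          · rw [hH, hT']
            simp
          · -- head empty, tail nonempty
            obtain ⟨i₀, hi₀⟩ := hT'
            have hi₀a : tl i₀ = a := (Finset.mem_filter.1 hi₀).2
            rw [hH] at hku hkw
            simp only [Finset.sum_empty] at hku hkw
            have hsum0 : ∑ i ∈ Finset.univ.filter (fun i => tl i = a),
                edgeX n ε (ucr (u i)) 0 σ
                = pdt (ucr (u i₀)) (0, σ)
                    * (∑ i ∈ Finset.univ.filter (fun i => tl i = a), pds (ucr (u i)) (0, σ))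
                  + ((-(pds (pds (ucr (u i₀))) (0, σ))) * tfeF n ε (ucr (u i₀) (0, σ)))
                    * (∑ i ∈ Finset.univ.filter (fun i => tl i = a),
                        (-(pds (pds (pds (ucr (u i)))) (0, σ)))) := by
              rw [Finset.mul_sum, Finset.mul_sum, ← Finset.sum_add_distrib]
              apply Finset.sum_congr rfl
              intro i hi
              have hia : tl i = a := (Finset.mem_filter.1 hi).2
              have hv1 : pdt (ucr (u i)) (0, σ) = pdt (ucr (u i₀)) (0, σ) :=
                hUt i i₀ 0 0 (fun τ hτ => hu.cont_u_tt a ha τ hτ i i₀ hia hi₀a)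
              have hv2 : pds (pds (ucr (u i))) (0, σ) = pds (pds (ucr (u i₀))) (0, σ) := by
                have hw := hu.cont_w_tt a ha σ hσIcc i i₀ hia hi₀a
                rw [bridge_w (hF i), bridge_w (hF i₀)] at hw
                exact neg_inj.1 hw
              have hv3 : ucr (u i) (0, σ) = ucr (u i₀) (0, σ) :=
                hu.cont_u_tt a ha σ hσIcc i i₀ hia hi₀a
              unfold edgeX
              rw [hv1, hv2, hv3]
              ring
            rw [hH, Finset.sum_empty, hsum0, ← hku, ← hkw]
            ring
        · obtain ⟨j₀, hj₀⟩ := hH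
          have hj₀a : hd j₀ = a := (Finset.mem_filter.1 hj₀).2
          have hsum1 : ∑ j ∈ Finset.univ.filter (fun j => hd j = a),
              edgeX n ε (ucr (u j)) 1 σ
              = pdt (ucr (u j₀)) (1, σ)
                  * (∑ j ∈ Finset.univ.filter (fun j => hd j = a), pds (ucr (u j)) (1, σ))
                + ((-(pds (pds (ucr (u j₀))) (1, σ))) * tfeF n ε (ucr (u j₀) (1, σ)))
                  * (∑ j ∈ Finset.univ.filter (fun j => hd j = a),
                      (-(pds (pds (pds (ucr (u j)))) (1, σ)))) := by
            rw [Finset.mul_sum, Finset.mul_sum, ← Finset.sum_add_distrib]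
            apply Finset.sum_congr rfl
            intro j hj
            have hja : hd j = a := (Finset.mem_filter.1 hj).2
            have hv1 : pdt (ucr (u j)) (1, σ) = pdt (ucr (u j₀)) (1, σ) :=
              hUt j j₀ 1 1 (fun τ hτ => hu.cont_u_hh a ha τ hτ j j₀ hja hj₀a)
            have hv2 : pds (pds (ucr (u j))) (1, σ) = pds (pds (ucr (u j₀))) (1, σ) := by
              have hw := hu.cont_w_hh a ha σ hσIcc j j₀ hja hj₀a
              rw [bridge_w (hF j), bridge_w (hF j₀)] at hw
              exact neg_inj.1 hw
            have hv3 : ucr (u j) (1, σ) = ucr (u j₀) (1, σ) :=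
              hu.cont_u_hh a ha σ hσIcc j j₀ hja hj₀a
            unfold edgeX
            rw [hv1, hv2, hv3]
            ring
          rcases (Finset.univ.filter (fun i => tl i = a)).eq_empty_or_nonempty with hT' | hT'
          · rw [hT'] at hku hkw
            simp only [Finset.sum_empty] at hku hkw
            rw [hT', Finset.sum_empty, hsum1, hku, hkw]
            ring
          · obtain ⟨i₀, hi₀⟩ := hT'
            have hi₀a : tl i₀ = a := (Finset.mem_filter.1 hi₀).2
            have hsum0 : ∑ i ∈ Finset.univ.filter (fun i => tl i = a),
                edgeX n ε (ucr (u i)) 0 σ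
                = pdt (ucr (u i₀)) (0, σ)
                    * (∑ i ∈ Finset.univ.filter (fun i => tl i = a), pds (ucr (u i)) (0, σ))
                  + ((-(pds (pds (ucr (u i₀))) (0, σ))) * tfeF n ε (ucr (u i₀) (0, σ)))
                    * (∑ i ∈ Finset.univ.filter (fun i => tl i = a),
                        (-(pds (pds (pds (ucr (u i)))) (0, σ)))) := by
              rw [Finset.mul_sum, Finset.mul_sum, ← Finset.sum_add_distrib]
              apply Finset.sum_congr rfl
              intro i hi
              have hia : tl i = a := (Finset.mem_filter.1 hi).2
              have hv1 : pdt (ucr (u i)) (0, σ) = pdt (ucr (u i₀)) (0, σ) :=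
                hUt i i₀ 0 0 (fun τ hτ => hu.cont_u_tt a ha τ hτ i i₀ hia hi₀a)
              have hv2 : pds (pds (ucr (u i))) (0, σ) = pds (pds (ucr (u i₀))) (0, σ) := by
                have hw := hu.cont_w_tt a ha σ hσIcc i i₀ hia hi₀a
                rw [bridge_w (hF i), bridge_w (hF i₀)] at hw
                exact neg_inj.1 hw
              have hv3 : ucr (u i) (0, σ) = ucr (u i₀) (0, σ) :=
                hu.cont_u_tt a ha σ hσIcc i i₀ hia hi₀a
              unfold edgeX
              rw [hv1, hv2, hv3]
              ring
            -- cross identifications between the chosen head and tail edges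
            have hc1 : pdt (ucr (u j₀)) (1, σ) = pdt (ucr (u i₀)) (0, σ) :=
              hUt j₀ i₀ 1 0 (fun τ hτ => hu.cont_u_ht a ha τ hτ j₀ i₀ hj₀a hi₀a)
            have hc2 : pds (pds (ucr (u j₀))) (1, σ) = pds (pds (ucr (u i₀))) (0, σ) := by
              have hw := hu.cont_w_ht a ha σ hσIcc j₀ i₀ hj₀a hi₀a
              rw [bridge_w (hF j₀), bridge_w (hF i₀)] at hw
              exact neg_inj.1 hw
            have hc3 : ucr (u j₀) (1, σ) = ucr (u i₀) (0, σ) :=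
              hu.cont_u_ht a ha σ hσIcc j₀ i₀ hj₀a hi₀a
            rw [hsum1, hsum0, hc1, hc2, hc3, hku, hkw]
            ring
    -- integrate the vanishing identity
    have hint : ∀ j ∈ Finset.univ, IntervalIntegrable
        (fun σ => edgeX n ε (ucr (u j)) 1 σ - edgeX n ε (ucr (u j)) 0 σ) volume 0 t :=
      fun j _ => ((hXc j 1).sub (hXc j 0)).intervalIntegrable 0 t
    rw [← intervalIntegral.integral_finset_sum hint]
    rw [intervalIntegral.integral_of_le ht.1]
    have hane : ∀ᵐ σ : ℝ, σ ≠ T := by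
      rw [MeasureTheory.ae_iff]
      simpa using Real.volume_singleton (a := T)
    have hzero : ∀ᵐ σ : ℝ, σ ∈ Set.Ioc (0:ℝ) t →
        (∑ j : Fin l, (edgeX n ε (ucr (u j)) 1 σ - edgeX n ε (ucr (u j)) 0 σ)) = 0 := by
      filter_upwards [hane] with σ hσT hσI
      exact hvanish σ ⟨hσI.1, lt_of_le_of_ne (hσI.2.trans ht.2) hσT⟩
    calc (∫ σ in Set.Ioc (0:ℝ) t,
        (∑ j : Fin l, (edgeX n ε (ucr (u j)) 1 σ - edgeX n ε (ucr (u j)) 0 σ)))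
        = ∫ _σ in Set.Ioc (0:ℝ) t, (0:ℝ) :=
          MeasureTheory.setIntegral_congr_ae measurableSet_Ioc hzero
      _ = 0 := by simp
  -- the master identity
  have KEY : ∀ t ∈ Icc (0:ℝ) T,
      (∑ j : Fin l, (∫ s in (0:ℝ)..1, (deriv (fun x => u j x t) s) ^ 2))
        + 2 * ∑ j : Fin l, (∫ σ in (0:ℝ)..t, ∫ s in (0:ℝ)..1,
            tfeF n ε (u j s σ) * (deriv (fun x => tfeW (u j) x σ) s) ^ 2)
      = ∑ j : Fin l, (∫ s in (0:ℝ)..1, (deriv (fun x => u j x 0) s) ^ 2) := by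
    intro t ht
    have ED : ∀ j : Fin l,
        (∫ s in (0:ℝ)..1, (pds (ucr (u j)) (s, t))^2)
          + 2 * (∫ σ in (0:ℝ)..t, ∫ s in (0:ℝ)..1,
              tfeF n ε (ucr (u j) (s, σ)) * (pds (pds (pds (ucr (u j)))) (s, σ))^2)
        = (∫ s in (0:ℝ)..1, (pds (ucr (u j)) (s, 0))^2)
          + 2 * (∫ σ in (0:ℝ)..t, (edgeX n ε (ucr (u j)) 1 σ - edgeX n ε (ucr (u j)) 0 σ)) :=
      fun j => edge_main hn hε (ucr (u j)) (hF j) ht.1 (hpdeP j t ht)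
    have hsum : ∑ j : Fin l, ((∫ s in (0:ℝ)..1, (pds (ucr (u j)) (s, t))^2)
          + 2 * (∫ σ in (0:ℝ)..t, ∫ s in (0:ℝ)..1,
              tfeF n ε (ucr (u j) (s, σ)) * (pds (pds (pds (ucr (u j)))) (s, σ))^2))
        = ∑ j : Fin l, ((∫ s in (0:ℝ)..1, (pds (ucr (u j)) (s, 0))^2)
          + 2 * (∫ σ in (0:ℝ)..t, (edgeX n ε (ucr (u j)) 1 σ - edgeX n ε (ucr (u j)) 0 σ))) :=
      Finset.sum_congr rfl (fun j _ => ED j)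
    rw [Finset.sum_add_distrib, Finset.sum_add_distrib, ← Finset.mul_sum, ← Finset.mul_sum,
      ZERO t ht, mul_zero, add_zero] at hsum
    calc (∑ j : Fin l, (∫ s in (0:ℝ)..1, (deriv (fun x => u j x t) s) ^ 2))
        + 2 * ∑ j : Fin l, (∫ σ in (0:ℝ)..t, ∫ s in (0:ℝ)..1,
            tfeF n ε (u j s σ) * (deriv (fun x => tfeW (u j) x σ) s) ^ 2)
        = (∑ j : Fin l, (∫ s in (0:ℝ)..1, (pds (ucr (u j)) (s, t))^2))
          + 2 * ∑ j : Fin l, (∫ σ in (0:ℝ)..t, ∫ s in (0:ℝ)..1,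
              tfeF n ε (ucr (u j) (s, σ)) * (pds (pds (pds (ucr (u j)))) (s, σ))^2) := by
          rw [Finset.sum_congr rfl (fun j _ => e1 j t),
            Finset.sum_congr rfl (fun j (_ : j ∈ Finset.univ) => hDD j t)]
      _ = ∑ j : Fin l, (∫ s in (0:ℝ)..1, (pds (ucr (u j)) (s, 0))^2) := hsum
      _ = ∑ j : Fin l, (∫ s in (0:ℝ)..1, (deriv (fun x => u j x 0) s) ^ 2) :=
          (Finset.sum_congr rfl (fun j _ => e1 j 0)).symm
  constructor
  · intro t ht
    have := KEY t ht
    linarith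
  · intro t₁ h₁ t₂ h₂ h12
    have k1 := KEY t₁ h₁
    have k2 := KEY t₂ h₂
    have hmono : ∑ j : Fin l, (∫ σ in (0:ℝ)..t₁, ∫ s in (0:ℝ)..1,
          tfeF n ε (u j s σ) * (deriv (fun x => tfeW (u j) x σ) s) ^ 2)
        ≤ ∑ j : Fin l, (∫ σ in (0:ℝ)..t₂, ∫ s in (0:ℝ)..1,
          tfeF n ε (u j s σ) * (deriv (fun x => tfeW (u j) x σ) s) ^ 2) := by
      apply Finset.sum_le_sum
      intro j _
      rw [hDD j t₁, hDD j t₂]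
      have hQH : Continuous (fun p : ℝ × ℝ =>
          tfeF n ε (ucr (u j) p) * (pds (pds (pds (ucr (u j)))) p)^2) := by
        have h1 : ContDiff ℝ 1 (pds (pds (pds (ucr (u j))))) :=
          contDiff_pds (k := 1) (contDiff_pds (k := 2)
            (contDiff_pds (k := 3) (hF j) (by norm_num)) (by norm_num)) (by norm_num)
        exact ((continuous_tfeF hn0).comp (hF j).continuous).mul (h1.continuous.pow 2)
      have hi2 : IntervalIntegrable (fun σ => ∫ s in (0:ℝ)..1,
          tfeF n ε (ucr (u j) (s, σ)) * (pds (pds (pds (ucr (u j)))) (s, σ))^2) volume 0 t₂ :=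
        fubini_integrable hQH h₂.1
      have hi0 : IntervalIntegrable (fun σ => ∫ s in (0:ℝ)..1,
          tfeF n ε (ucr (u j) (s, σ)) * (pds (pds (pds (ucr (u j)))) (s, σ))^2) volume 0 t₁ := by
        apply hi2.mono_set
        rw [Set.uIcc_of_le h₁.1, Set.uIcc_of_le h₂.1]
        exact Set.Icc_subset_Icc le_rfl h12
      have hi1 : IntervalIntegrable (fun σ => ∫ s in (0:ℝ)..1,
          tfeF n ε (ucr (u j) (s, σ)) * (pds (pds (pds (ucr (u j)))) (s, σ))^2) volume t₁ t₂ := by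
        apply hi2.mono_set
        rw [Set.uIcc_of_le h12, Set.uIcc_of_le h₂.1]
        exact Set.Icc_subset_Icc h₁.1 le_rfl
      have hadd := intervalIntegral.integral_add_adjacent_intervals hi0 hi1
      have hpos : 0 ≤ ∫ σ in t₁..t₂, ∫ s in (0:ℝ)..1,
          tfeF n ε (ucr (u j) (s, σ)) * (pds (pds (pds (ucr (u j)))) (s, σ))^2 :=
        intervalIntegral.integral_nonneg h12 (fun σ _ =>
          intervalIntegral.integral_nonneg zero_le_one
            (fun s _ => mul_nonneg (tfeF_nonneg hε.le) (sq_nonneg _)))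
      linarith
    linarith
end EdgeKey
end

section
/- Let (u_j)_{j=1}^l be a classical solution of the regularized thin-film system on the graph on [0,T]. Fix t ∈ [0,T] and suppose there exists s₀ ∈ [0,1] such that ∑_{j=1}^l [ u_j(s₀,t) w_j(s₀,t) + (1/2)(∂_s u_j(s₀,t))² ] ≤ 0. Then (3/2) ∑_{j=1}^l ∫₀¹ (∂_s u_j(s,t))² ds ≤ ( ∑_{j=1}^l ∫₀¹ f_ε(u_j(s,t)) (∂_s w_j(s,t))² ds )^{1/2} · ( ∑_{j=1}^l ∫₀¹ u_j(s,t)² / f_ε(u_j(s,t)) ds )^{1/2}. Moreover, since u² / (|u|^n + ε) ≤ |u|^{2−n} pointwise, if 1 ≤ n ≤ 2 then 9 E(t)² ≤ ( ∑_j ∫₀¹ f_ε(u_j)(∂_s w_j)² ds ) · ( ∑_j ∫₀¹ |u_j(s,t)|^{2−n} ds ), where E(t) := (1/2)∑_j ∫₀¹ (∂_s u_j(s,t))² ds. -/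
open Set MeasureTheory intervalIntegral Real Filter

/-- Cauchy–Schwarz for interval integrals of continuous nonneg functions. -/
lemma tfe_cs_int (p q : ℝ → ℝ) (hp : Continuous p) (hq : Continuous q)
    (hp0 : ∀ x, 0 ≤ p x) (hq0 : ∀ x, 0 ≤ q x) :
    ∫ s in (0:ℝ)..1, p s * q s
      ≤ Real.sqrt (∫ s in (0:ℝ)..1, p s ^ 2) * Real.sqrt (∫ s in (0:ℝ)..1, q s ^ 2) := by
  set A := ∫ s in (0:ℝ)..1, p s ^ 2 with hA
  set B := ∫ s in (0:ℝ)..1, q s ^ 2 with hB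
  have hA0 : 0 ≤ A := intervalIntegral.integral_nonneg (by norm_num) (fun x _ => sq_nonneg _)
  have hB0 : 0 ≤ B := intervalIntegral.integral_nonneg (by norm_num) (fun x _ => sq_nonneg _)
  have key : ∀ c : ℝ, 0 < c → (∫ s in (0:ℝ)..1, p s * q s) ≤ A / (2 * c) + c * B / 2 := by
    intro c hc
    have h1 : (∫ s in (0:ℝ)..1, p s * q s)
        ≤ ∫ s in (0:ℝ)..1, (p s ^ 2 / (2 * c) + c * q s ^ 2 / 2) := by
      apply intervalIntegral.integral_mono_on (by norm_num)
      · exact (hp.mul hq).intervalIntegrable _ _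
      · exact (((hp.pow 2).div_const _).add ((continuous_const.mul (hq.pow 2)).div_const _)).intervalIntegrable _ _
      · intro x _
        have hkey : p x ^ 2 / (2 * c) + c * q x ^ 2 / 2 - p x * q x
            = (p x - c * q x) ^ 2 / (2 * c) := by field_simp; ring
        nlinarith [div_nonneg (sq_nonneg (p x - c * q x)) (le_of_lt (by linarith : (0:ℝ) < 2*c))]
    rw [intervalIntegral.integral_add (f := fun s => p s ^ 2 / (2 * c)) (g := fun s => c * q s ^ 2 / 2)
      (((hp.pow 2).div_const _).intervalIntegrable _ _)
      ((continuous_const.mul (hq.pow 2)).div_const _ |>.intervalIntegrable _ _)] at h1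
    rw [intervalIntegral.integral_div, intervalIntegral.integral_div,
      intervalIntegral.integral_const_mul] at h1
    linarith
  rcases eq_or_lt_of_le hA0 with hA' | hA'
  · -- A = 0
    have hle : ∀ c : ℝ, 0 < c → (∫ s in (0:ℝ)..1, p s * q s) ≤ c * B / 2 := by
      intro c hc; have := key c hc; rw [← hA'] at this; simpa using this
    have h0 : (∫ s in (0:ℝ)..1, p s * q s) ≤ 0 := by
      by_contra h
      push_neg at h
      rcases eq_or_lt_of_le hB0 with hB' | hB'
      · have := hle 1 one_pos; rw [← hB'] at this; simp at this; linarith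
      · have := hle ((∫ s in (0:ℝ)..1, p s * q s) / B) (div_pos h hB')
        rw [div_mul_eq_mul_div, mul_div_assoc, div_self (ne_of_gt hB')] at this
        linarith
    calc _ ≤ (0:ℝ) := h0
    _ ≤ _ := mul_nonneg (Real.sqrt_nonneg _) (Real.sqrt_nonneg _)
  rcases eq_or_lt_of_le hB0 with hB' | hB'
  · have hle : ∀ c : ℝ, 0 < c → (∫ s in (0:ℝ)..1, p s * q s) ≤ A / (2 * c) := by
      intro c hc; have := key c hc; rw [← hB'] at this; simpa using this
    have h0 : (∫ s in (0:ℝ)..1, p s * q s) ≤ 0 := by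
      by_contra h
      push_neg at h
      have := hle (A / (∫ s in (0:ℝ)..1, p s * q s)) (div_pos hA' h)
      have heq : A / (2 * (A / (∫ s in (0:ℝ)..1, p s * q s)))
          = (∫ s in (0:ℝ)..1, p s * q s) / 2 := by
        have h1 : A ≠ 0 := ne_of_gt hA'
        have h2 : (∫ s in (0:ℝ)..1, p s * q s) ≠ 0 := ne_of_gt h
        field_simp
      rw [heq] at this
      linarith
    calc _ ≤ (0:ℝ) := h0
    _ ≤ _ := mul_nonneg (Real.sqrt_nonneg _) (Real.sqrt_nonneg _)
  · have hc : 0 < Real.sqrt A / Real.sqrt B :=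
      div_pos (Real.sqrt_pos.2 hA') (Real.sqrt_pos.2 hB')
    have := key _ hc
    have hsa : Real.sqrt A ^ 2 = A := Real.sq_sqrt hA0
    have hsb : Real.sqrt B ^ 2 = B := Real.sq_sqrt hB0
    have hsa' : 0 < Real.sqrt A := Real.sqrt_pos.2 hA'
    have hsb' : 0 < Real.sqrt B := Real.sqrt_pos.2 hB'
    have heq : A / (2 * (Real.sqrt A / Real.sqrt B)) + (Real.sqrt A / Real.sqrt B) * B / 2
        = Real.sqrt A * Real.sqrt B := by
      field_simp
      nlinarith [hsa, hsb]
    linarith [heq ▸ this]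

section calc4
variable {v : ℝ → ℝ}

lemma tfe_cont_id (hv : ContDiff ℝ 4 v) (k : ℕ) (hk : k ≤ 4) : Continuous (iteratedDeriv k v) :=
  hv.continuous_iteratedDeriv k (by exact_mod_cast Nat.cast_le.mpr hk)

lemma tfe_diff_id (hv : ContDiff ℝ 4 v) (k : ℕ) (hk : k < 4) : Differentiable ℝ (iteratedDeriv k v) :=
  hv.differentiable_iteratedDeriv k (by exact_mod_cast Nat.cast_lt.mpr hk)

lemma tfe_hasderiv_id (hv : ContDiff ℝ 4 v) (k : ℕ) (hk : k < 4) (s : ℝ) :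
    HasDerivAt (iteratedDeriv k v) (iteratedDeriv (k + 1) v s) s := by
  have := (tfe_diff_id hv k hk s).hasDerivAt
  rwa [iteratedDeriv_succ]

/-- Integration by parts identity: ∫ (v')² = v(1)v'(1) − v(0)v'(0) − ∫ v v''. -/
lemma tfe_ibp (hv : ContDiff ℝ 4 v) :
    ∫ s in (0:ℝ)..1, (deriv v s) ^ 2
      = v 1 * deriv v 1 - v 0 * deriv v 0 - ∫ s in (0:ℝ)..1, v s * iteratedDeriv 2 v s := by
  have h1 : ∀ s ∈ uIcc (0:ℝ) 1, HasDerivAt (fun x => v x * deriv v x)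
      ((deriv v s) ^ 2 + v s * iteratedDeriv 2 v s) s := by
    intro s _
    have hd1 : HasDerivAt v (deriv v s) s := by
      have := tfe_hasderiv_id hv 0 (by norm_num) s
      simpa [iteratedDeriv_one] using this
    have hd2 : HasDerivAt (deriv v) (iteratedDeriv 2 v s) s := by
      have := tfe_hasderiv_id hv 1 (by norm_num) s
      simpa [iteratedDeriv_one] using this
    have := hd1.mul hd2
    refine this.congr_deriv ?_
    ring
  have hc : Continuous fun s => (deriv v s) ^ 2 + v s * iteratedDeriv 2 v s := by
    have c1 : Continuous (deriv v) := by
      have := tfe_cont_id hv 1 (by norm_num); simpa [iteratedDeriv_one] using this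
    exact (c1.pow 2).add (hv.continuous.mul (tfe_cont_id hv 2 (by norm_num)))
  have := intervalIntegral.integral_eq_sub_of_hasDerivAt h1 (hc.intervalIntegrable _ _)
  have c1 : Continuous (deriv v) := by
    have := tfe_cont_id hv 1 (by norm_num); simpa [iteratedDeriv_one] using this
  rw [intervalIntegral.integral_add (f := fun s => deriv v s ^ 2) (g := fun s => v s * iteratedDeriv 2 v s)
    ((c1.pow 2).intervalIntegrable _ _)
    ((hv.continuous.mul (tfe_cont_id hv 2 (by norm_num))).intervalIntegrable _ _)] at this
  linarith

/-- FTC for `F(s) = -v v'' + ½ (v')²`: `F b - F a = ∫_a^b v · (-v''')`. -/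
lemma tfe_ftcF (hv : ContDiff ℝ 4 v) (a b : ℝ) :
    (v b * (-(iteratedDeriv 2 v b)) + (1/2) * (deriv v b) ^ 2)
      - (v a * (-(iteratedDeriv 2 v a)) + (1/2) * (deriv v a) ^ 2)
      = ∫ s in a..b, v s * (-(iteratedDeriv 3 v s)) := by
  have h1 : ∀ s ∈ uIcc a b, HasDerivAt
      (fun x => v x * (-(iteratedDeriv 2 v x)) + (1/2) * (deriv v x) ^ 2)
      (v s * (-(iteratedDeriv 3 v s))) s := by
    intro s _
    have hd1 : HasDerivAt v (deriv v s) s := by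
      have := tfe_hasderiv_id hv 0 (by norm_num) s
      simpa [iteratedDeriv_one] using this
    have hd2 : HasDerivAt (deriv v) (iteratedDeriv 2 v s) s := by
      have := tfe_hasderiv_id hv 1 (by norm_num) s
      simpa [iteratedDeriv_one] using this
    have hd3 : HasDerivAt (iteratedDeriv 2 v) (iteratedDeriv 3 v s) s :=
      tfe_hasderiv_id hv 2 (by norm_num) s
    have := (hd1.mul hd3.neg).add ((hd2.pow 2).const_mul (1/2 : ℝ))
    refine this.congr_deriv ?_
    simp only [Pi.neg_apply]
    ring
  have hc : Continuous fun s => v s * (-(iteratedDeriv 3 v s)) :=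
    hv.continuous.mul (tfe_cont_id hv 3 (by norm_num)).neg
  exact (intervalIntegral.integral_eq_sub_of_hasDerivAt h1 (hc.intervalIntegrable _ _)).symm

end calc4

lemma tfe_boundary_zero {l m : ℕ} (tl hd : Fin l → Fin m) (bdry : Set (Fin m))
    (V1 V0 D1 D0 : Fin l → ℝ)
    (hbh : ∀ a ∈ bdry, ∀ j, hd j = a → D1 j = 0)
    (hbt : ∀ a ∈ bdry, ∀ i, tl i = a → D0 i = 0)
    (hhh : ∀ a ∉ bdry, ∀ j j', hd j = a → hd j' = a → V1 j = V1 j')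
    (htt : ∀ a ∉ bdry, ∀ i i', tl i = a → tl i' = a → V0 i = V0 i')
    (hht : ∀ a ∉ bdry, ∀ j i, hd j = a → tl i = a → V1 j = V0 i)
    (hk : ∀ a ∉ bdry, ∑ j ∈ Finset.univ.filter (fun j => hd j = a), D1 j
          = ∑ i ∈ Finset.univ.filter (fun i => tl i = a), D0 i) :
    ∑ j, (V1 j * D1 j - V0 j * D0 j) = 0 := by
  classical
  rw [Finset.sum_sub_distrib,
    ← Finset.sum_fiberwise Finset.univ hd (fun j => V1 j * D1 j),
    ← Finset.sum_fiberwise Finset.univ tl (fun i => V0 i * D0 i),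
    ← Finset.sum_sub_distrib]
  apply Finset.sum_eq_zero
  intro a _
  by_cases ha : a ∈ bdry
  · rw [Finset.sum_eq_zero (fun j hj => by
        rw [hbh a ha j (Finset.mem_filter.1 hj).2, mul_zero]),
      Finset.sum_eq_zero (fun i hi => by
        rw [hbt a ha i (Finset.mem_filter.1 hi).2, mul_zero]), sub_zero]
  · by_cases hh : (Finset.univ.filter (fun j => hd j = a)).Nonempty
    · obtain ⟨j₀, hj₀⟩ := hh
      have hj₀' : hd j₀ = a := (Finset.mem_filter.1 hj₀).2
      have e1 : ∑ j ∈ Finset.univ.filter (fun j => hd j = a), V1 j * D1 j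
          = V1 j₀ * ∑ j ∈ Finset.univ.filter (fun j => hd j = a), D1 j := by
        rw [Finset.mul_sum]
        exact Finset.sum_congr rfl fun j hj => by
          rw [hhh a ha j j₀ (Finset.mem_filter.1 hj).2 hj₀']
      have e0 : ∑ i ∈ Finset.univ.filter (fun i => tl i = a), V0 i * D0 i
          = V1 j₀ * ∑ i ∈ Finset.univ.filter (fun i => tl i = a), D0 i := by
        rw [Finset.mul_sum]
        exact Finset.sum_congr rfl fun i hi => by
          rw [← hht a ha j₀ i hj₀' (Finset.mem_filter.1 hi).2]
      rw [e1, e0, hk a ha, sub_self]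
    · rw [Finset.not_nonempty_iff_eq_empty] at hh
      have hk0 : ∑ i ∈ Finset.univ.filter (fun i => tl i = a), D0 i = 0 := by
        have := hk a ha
        rw [hh, Finset.sum_empty] at this
        exact this.symm
      rw [hh, Finset.sum_empty, zero_sub, neg_eq_zero]
      by_cases ht : (Finset.univ.filter (fun i => tl i = a)).Nonempty
      · obtain ⟨i₀, hi₀⟩ := ht
        have e0 : ∑ i ∈ Finset.univ.filter (fun i => tl i = a), V0 i * D0 i
            = V0 i₀ * ∑ i ∈ Finset.univ.filter (fun i => tl i = a), D0 i := by
          rw [Finset.mul_sum]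
          exact Finset.sum_congr rfl fun i hi => by
            rw [htt a ha i i₀ (Finset.mem_filter.1 hi).2 (Finset.mem_filter.1 hi₀).2]
        rw [e0, hk0, mul_zero]
      · rw [Finset.not_nonempty_iff_eq_empty] at ht
        rw [ht, Finset.sum_empty]

lemma tfe_pointwise (n ε : ℝ) (hn : 1 ≤ n) (hn2 : n ≤ 2) (hε : 0 < ε) (z : ℝ) :
    z ^ 2 / (|z| ^ n + ε) ≤ |z| ^ (2 - n) := by
  rcases eq_or_ne z 0 with rfl | hz
  · rw [abs_zero, Real.zero_rpow (by linarith : n ≠ 0)]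
    simp only [ne_eq, OfNat.ofNat_ne_zero, not_false_eq_true, zero_pow, zero_add, zero_div]
    exact Real.rpow_nonneg le_rfl _
  · have habs : 0 < |z| := abs_pos.2 hz
    have hzn : 0 < |z| ^ n := Real.rpow_pos_of_pos habs n
    have h1 : z ^ 2 / (|z| ^ n + ε) ≤ z ^ 2 / |z| ^ n :=
      div_le_div_of_nonneg_left (sq_nonneg z) hzn (by linarith)
    refine h1.trans (le_of_eq ?_)
    rw [← sq_abs, ← Real.rpow_two, Real.rpow_sub habs]
/-- the key interpolation inequality for the energy. -/
theorem energy_interpolation_inequality {l m : ℕ} (hl : 1 ≤ l) (hm : 1 ≤ m)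
    (n ε T : ℝ) (hn : 1 ≤ n) (hε : 0 < ε) (hT : 0 < T)
    (tl hd : Fin l → Fin m) (bdry : Set (Fin m)) (u : Fin l → ℝ → ℝ → ℝ)
    (hu : IsGraphTFESolution n ε T tl hd bdry u)
    (t : ℝ) (ht : t ∈ Icc (0:ℝ) T)
    (s₀ : ℝ) (hs₀ : s₀ ∈ Icc (0:ℝ) 1)
    (hneg : ∑ j : Fin l,
        (u j s₀ t * tfeW (u j) s₀ t + (1 / 2) * (deriv (fun x => u j x t) s₀) ^ 2) ≤ 0) :
    (3 / 2) * ∑ j : Fin l, (∫ s in (0:ℝ)..1, (deriv (fun x => u j x t) s) ^ 2)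
      ≤ Real.sqrt (∑ j : Fin l,
            ∫ s in (0:ℝ)..1, tfeF n ε (u j s t) * (deriv (fun x => tfeW (u j) x t) s) ^ 2)
        * Real.sqrt (∑ j : Fin l,
            ∫ s in (0:ℝ)..1, (u j s t) ^ 2 / tfeF n ε (u j s t)) ∧
    (n ≤ 2 →
      (∀ z : ℝ, z ^ 2 / (|z| ^ n + ε) ≤ |z| ^ (2 - n)) ∧
      9 * ((1 / 2) * ∑ j : Fin l, (∫ s in (0:ℝ)..1, (deriv (fun x => u j x t) s) ^ 2)) ^ 2
        ≤ (∑ j : Fin l,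
              ∫ s in (0:ℝ)..1, tfeF n ε (u j s t) * (deriv (fun x => tfeW (u j) x t) s) ^ 2)
          * (∑ j : Fin l, ∫ s in (0:ℝ)..1, |u j s t| ^ (2 - n))) := by
  classical
  -- one-variable regularity
  have hv : ∀ j, ContDiff ℝ 4 (fun x => u j x t) := by
    intro j
    have h1 : ContDiff ℝ 4 (fun s : ℝ => (s, t)) := contDiff_id.prodMk contDiff_const
    exact (hu.smooth j).comp h1
  have hcv : ∀ j, Continuous (fun x => u j x t) := fun j => (hv j).continuous
  have hcd : ∀ j, Continuous (deriv (fun x => u j x t)) := by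
    intro j
    have := tfe_cont_id (hv j) 1 (by norm_num)
    simpa [iteratedDeriv_one] using this
  have hc2 : ∀ j, Continuous (iteratedDeriv 2 (fun x => u j x t)) :=
    fun j => tfe_cont_id (hv j) 2 (by norm_num)
  have hc3 : ∀ j, Continuous (iteratedDeriv 3 (fun x => u j x t)) :=
    fun j => tfe_cont_id (hv j) 3 (by norm_num)
  have hcw : ∀ j, Continuous (fun s => tfeW (u j) s t) := fun j => (hc2 j).neg
  have hW' : ∀ j s, deriv (fun x => tfeW (u j) x t) s
      = -(iteratedDeriv 3 (fun x => u j x t) s) := by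
    intro j s
    have heq : (fun x => tfeW (u j) x t)
        = fun x => -(iteratedDeriv 2 (fun y => u j y t) x) := rfl
    rw [heq, deriv.fun_neg, ← iteratedDeriv_succ]
  have hf_pos : ∀ z : ℝ, 0 < tfeF n ε z := by
    intro z
    have : (0:ℝ) ≤ |z| ^ n := Real.rpow_nonneg (abs_nonneg z) n
    unfold tfeF; linarith
  have hf_cont : ∀ j, Continuous (fun s => tfeF n ε (u j s t)) := by
    intro j
    unfold tfeF
    exact ((continuous_abs.comp (hcv j)).rpow_const
      (fun x => Or.inr (by linarith))).add continuous_const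
  -- Step A: boundary terms vanish
  have hB : ∑ j : Fin l, (u j 1 t * deriv (fun x => u j x t) 1
      - u j 0 t * deriv (fun x => u j x t) 0) = 0 :=
    tfe_boundary_zero tl hd bdry (fun j => u j 1 t) (fun j => u j 0 t)
      (fun j => deriv (fun x => u j x t) 1) (fun j => deriv (fun x => u j x t) 0)
      (fun a ha j hj => (hu.bdry_head a ha t ht j hj).1)
      (fun a ha i hi => (hu.bdry_tail a ha t ht i hi).1)
      (fun a ha j j' h1 h2 => hu.cont_u_hh a ha t ht j j' h1 h2)
      (fun a ha i i' h1 h2 => hu.cont_u_tt a ha t ht i i' h1 h2)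
      (fun a ha j i h1 h2 => hu.cont_u_ht a ha t ht j i h1 h2)
      (fun a ha => hu.kirchhoff_u a ha t ht)
  -- Step B: integration by parts on each edge
  have hibp : ∀ j, (∫ s in (0:ℝ)..1, (deriv (fun x => u j x t) s) ^ 2)
      = (u j 1 t * deriv (fun x => u j x t) 1 - u j 0 t * deriv (fun x => u j x t) 0)
        + ∫ s in (0:ℝ)..1, u j s t * tfeW (u j) s t := by
    intro j
    have h := tfe_ibp (hv j)
    have h2 : (∫ s in (0:ℝ)..1, u j s t * tfeW (u j) s t)
        = -∫ s in (0:ℝ)..1, u j s t * iteratedDeriv 2 (fun x => u j x t) s := by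
      rw [← intervalIntegral.integral_neg]
      congr 1
      funext s
      show u j s t * -(iteratedDeriv 2 (fun x => u j x t) s) = _
      ring
    rw [h2]
    linarith [h]
  have hS : (∑ j : Fin l, ∫ s in (0:ℝ)..1, (deriv (fun x => u j x t) s) ^ 2)
      = ∑ j : Fin l, ∫ s in (0:ℝ)..1, u j s t * tfeW (u j) s t := by
    rw [Finset.sum_congr rfl (fun j _ => hibp j), Finset.sum_add_distrib, hB, zero_add]
  -- Step C: FTC bound on the pointwise energy density
  set Φ : ℝ → ℝ := fun s => ∑ j : Fin l,
      (u j s t * tfeW (u j) s t + 1 / 2 * (deriv (fun x => u j x t) s) ^ 2) with hΦdef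
  have hΦ0 : Φ s₀ ≤ 0 := hneg
  set G : ℝ → ℝ := fun s => ∑ j : Fin l,
      u j s t * -(iteratedDeriv 3 (fun x => u j x t) s) with hGdef
  have hGcont : Continuous G :=
    continuous_finset_sum _ (fun j _ => (hcv j).mul (hc3 j).neg)
  have hΦcont : Continuous Φ :=
    continuous_finset_sum _ (fun j _ =>
      ((hcv j).mul (hcw j)).add (continuous_const.mul ((hcd j).pow 2)))
  have hftc : ∀ s : ℝ, Φ s = Φ s₀ + ∫ x in s₀..s, G x := by
    intro s
    have hsum : ∀ j : Fin l,
        (u j s t * tfeW (u j) s t + 1 / 2 * (deriv (fun x => u j x t) s) ^ 2)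
        - (u j s₀ t * tfeW (u j) s₀ t + 1 / 2 * (deriv (fun x => u j x t) s₀) ^ 2)
        = ∫ x in s₀..s, u j x t * -(iteratedDeriv 3 (fun x => u j x t) x) := by
      intro j
      exact tfe_ftcF (hv j) s₀ s
    have hGint : (∫ x in s₀..s, G x)
        = ∑ j : Fin l, ∫ x in s₀..s, u j x t * -(iteratedDeriv 3 (fun x => u j x t) x) := by
      rw [hGdef]
      exact intervalIntegral.integral_finset_sum
        (fun j _ => ((hcv j).mul (hc3 j).neg).intervalIntegrable _ _)
    have hdiff : Φ s - Φ s₀ = ∫ x in s₀..s, G x := by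
      rw [hΦdef, hGint, ← Finset.sum_sub_distrib]
      exact Finset.sum_congr rfl (fun j _ => hsum j)
    linarith [hdiff]
  set H : ℝ → ℝ := fun s => ∑ j : Fin l,
      |u j s t| * |iteratedDeriv 3 (fun x => u j x t) s| with hHdef
  have hHcont : Continuous H :=
    continuous_finset_sum _ (fun j _ => (hcv j).abs.mul (hc3 j).abs)
  set D : ℝ := ∫ s in (0:ℝ)..1, H s with hDdef
  have hGH : ∀ s, |G s| ≤ H s := by
    intro s
    refine (Finset.abs_sum_le_sum_abs _ _).trans ?_
    apply Finset.sum_le_sum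
    intro j _
    rw [abs_mul, abs_neg]
  have hΦD : ∀ s ∈ Icc (0:ℝ) 1, Φ s ≤ D := by
    intro s hs
    rw [hftc s]
    have h1 : (∫ x in s₀..s, G x) ≤ |∫ x in s₀..s, G x| := le_abs_self _
    have h2 : |∫ x in s₀..s, G x| ≤ ∫ x in (0:ℝ)..1, |G x| := by
      rcases le_total s₀ s with hle | hle
      · refine (intervalIntegral.abs_integral_le_integral_abs hle).trans ?_
        exact intervalIntegral.integral_mono_interval hs₀.1 hle hs.2
          (Eventually.of_forall (fun x => abs_nonneg _)) (hGcont.abs.intervalIntegrable _ _)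
      · rw [intervalIntegral.integral_symm, abs_neg]
        refine (intervalIntegral.abs_integral_le_integral_abs hle).trans ?_
        exact intervalIntegral.integral_mono_interval hs.1 hle hs₀.2
          (Eventually.of_forall (fun x => abs_nonneg _)) (hGcont.abs.intervalIntegrable _ _)
    have h3 : (∫ x in (0:ℝ)..1, |G x|) ≤ D := by
      rw [hDdef]
      apply intervalIntegral.integral_mono_on (by norm_num)
        (hGcont.abs.intervalIntegrable _ _) (hHcont.intervalIntegrable _ _)
      intro x _
      exact hGH x
    linarith [hΦ0]
  -- Step D: integrate the bound
  have hint : (∫ s in (0:ℝ)..1, Φ s) ≤ D := by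
    calc (∫ s in (0:ℝ)..1, Φ s) ≤ ∫ _ in (0:ℝ)..1, D :=
          intervalIntegral.integral_mono_on (by norm_num) (hΦcont.intervalIntegrable _ _)
            intervalIntegrable_const hΦD
      _ = D := by simp
  have hΦint : (∫ s in (0:ℝ)..1, Φ s)
      = (∑ j : Fin l, ∫ s in (0:ℝ)..1, u j s t * tfeW (u j) s t)
        + 1 / 2 * ∑ j : Fin l, ∫ s in (0:ℝ)..1, (deriv (fun x => u j x t) s) ^ 2 := by
    rw [hΦdef]
    rw [intervalIntegral.integral_finset_sum
      (f := fun j s => u j s t * tfeW (u j) s t + 1 / 2 * (deriv (fun x => u j x t) s) ^ 2) (fun j _ =>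
      (((hcv j).mul (hcw j)).add
        (continuous_const.mul ((hcd j).pow 2))).intervalIntegrable _ _)]
    have hper : ∀ j : Fin l,
        (∫ s in (0:ℝ)..1, (u j s t * tfeW (u j) s t
            + 1 / 2 * (deriv (fun x => u j x t) s) ^ 2))
        = (∫ s in (0:ℝ)..1, u j s t * tfeW (u j) s t)
          + 1 / 2 * ∫ s in (0:ℝ)..1, (deriv (fun x => u j x t) s) ^ 2 := by
      intro j
      rw [intervalIntegral.integral_add (f := fun s => u j s t * tfeW (u j) s t)
        (g := fun s => 1 / 2 * (deriv (fun x => u j x t) s) ^ 2)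
        (((hcv j).mul (hcw j)).intervalIntegrable _ _)
        ((continuous_const.mul ((hcd j).pow 2)).intervalIntegrable _ _),
        intervalIntegral.integral_const_mul]
    rw [Finset.sum_congr rfl (fun j _ => hper j), Finset.sum_add_distrib, Finset.mul_sum]
  have hmain : (3 / 2) * (∑ j : Fin l, ∫ s in (0:ℝ)..1, (deriv (fun x => u j x t) s) ^ 2)
      ≤ D := by
    rw [hΦint] at hint
    rw [hS]
    linarith [hS, hint]
  -- Step E: Cauchy-Schwarz
  have hedge : ∀ j : Fin l,
      (∫ s in (0:ℝ)..1, |u j s t| * |iteratedDeriv 3 (fun x => u j x t) s|)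
        ≤ Real.sqrt (∫ s in (0:ℝ)..1,
              tfeF n ε (u j s t) * (deriv (fun x => tfeW (u j) x t) s) ^ 2)
          * Real.sqrt (∫ s in (0:ℝ)..1, (u j s t) ^ 2 / tfeF n ε (u j s t)) := by
    intro j
    have hsq : ∀ s : ℝ, 0 < Real.sqrt (tfeF n ε (u j s t)) :=
      fun s => Real.sqrt_pos.2 (hf_pos _)
    have hp : Continuous (fun s =>
        Real.sqrt (tfeF n ε (u j s t)) * |iteratedDeriv 3 (fun x => u j x t) s|) :=
      ((hf_cont j).sqrt).mul (hc3 j).abs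
    have hq : Continuous (fun s => |u j s t| / Real.sqrt (tfeF n ε (u j s t))) :=
      (hcv j).abs.div ((hf_cont j).sqrt) (fun s => (hsq s).ne')
    have hcs := tfe_cs_int _ _ hp hq
      (fun s => mul_nonneg (Real.sqrt_nonneg _) (abs_nonneg _))
      (fun s => div_nonneg (abs_nonneg _) (Real.sqrt_nonneg _))
    have e1 : ∀ s : ℝ,
        Real.sqrt (tfeF n ε (u j s t)) * |iteratedDeriv 3 (fun x => u j x t) s|
          * (|u j s t| / Real.sqrt (tfeF n ε (u j s t)))
        = |u j s t| * |iteratedDeriv 3 (fun x => u j x t) s| := by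
      intro s
      field_simp [(hsq s).ne']
    have e2 : ∀ s : ℝ,
        (Real.sqrt (tfeF n ε (u j s t)) * |iteratedDeriv 3 (fun x => u j x t) s|) ^ 2
        = tfeF n ε (u j s t) * (deriv (fun x => tfeW (u j) x t) s) ^ 2 := by
      intro s
      rw [mul_pow, Real.sq_sqrt (hf_pos _).le, sq_abs, hW']
      ring
    have e3 : ∀ s : ℝ,
        (|u j s t| / Real.sqrt (tfeF n ε (u j s t))) ^ 2
        = (u j s t) ^ 2 / tfeF n ε (u j s t) := by
      intro s
      rw [div_pow, sq_abs, Real.sq_sqrt (hf_pos _).le]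
    simp only [e1, e2, e3] at hcs
    exact hcs
  have hD_eq : D = ∑ j : Fin l,
      ∫ s in (0:ℝ)..1, |u j s t| * |iteratedDeriv 3 (fun x => u j x t) s| := by
    rw [hDdef, hHdef]
    exact intervalIntegral.integral_finset_sum
      (fun j _ => ((hcv j).abs.mul (hc3 j).abs).intervalIntegrable _ _)
  have hA0 : ∀ j : Fin l, 0 ≤ ∫ s in (0:ℝ)..1,
      tfeF n ε (u j s t) * (deriv (fun x => tfeW (u j) x t) s) ^ 2 :=
    fun j => intervalIntegral.integral_nonneg (by norm_num)
      (fun x _ => mul_nonneg (hf_pos _).le (sq_nonneg _))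
  have hB0 : ∀ j : Fin l, 0 ≤ ∫ s in (0:ℝ)..1, (u j s t) ^ 2 / tfeF n ε (u j s t) :=
    fun j => intervalIntegral.integral_nonneg (by norm_num)
      (fun x _ => div_nonneg (sq_nonneg _) (hf_pos _).le)
  have hpart1 : (3 / 2) * ∑ j : Fin l, (∫ s in (0:ℝ)..1, (deriv (fun x => u j x t) s) ^ 2)
      ≤ Real.sqrt (∑ j : Fin l,
            ∫ s in (0:ℝ)..1, tfeF n ε (u j s t) * (deriv (fun x => tfeW (u j) x t) s) ^ 2)
        * Real.sqrt (∑ j : Fin l,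
            ∫ s in (0:ℝ)..1, (u j s t) ^ 2 / tfeF n ε (u j s t)) := by
    calc (3 / 2) * ∑ j : Fin l, (∫ s in (0:ℝ)..1, (deriv (fun x => u j x t) s) ^ 2)
        ≤ D := hmain
      _ = ∑ j : Fin l,
            ∫ s in (0:ℝ)..1, |u j s t| * |iteratedDeriv 3 (fun x => u j x t) s| := hD_eq
      _ ≤ ∑ j : Fin l,
            Real.sqrt (∫ s in (0:ℝ)..1,
                tfeF n ε (u j s t) * (deriv (fun x => tfeW (u j) x t) s) ^ 2)
              * Real.sqrt (∫ s in (0:ℝ)..1, (u j s t) ^ 2 / tfeF n ε (u j s t)) :=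
          Finset.sum_le_sum (fun j _ => hedge j)
      _ ≤ _ := Real.sum_sqrt_mul_sqrt_le Finset.univ hA0 hB0
  refine ⟨hpart1, fun hn2 => ⟨fun z => tfe_pointwise n ε hn hn2 hε z, ?_⟩⟩
  have hBle : (∑ j : Fin l, ∫ s in (0:ℝ)..1, (u j s t) ^ 2 / tfeF n ε (u j s t))
      ≤ ∑ j : Fin l, ∫ s in (0:ℝ)..1, |u j s t| ^ (2 - n) := by
    apply Finset.sum_le_sum
    intro j _
    have hlc : Continuous (fun s => (u j s t) ^ 2 / tfeF n ε (u j s t)) :=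
      ((hcv j).pow 2).div (hf_cont j) (fun s => (hf_pos _).ne')
    have hrc : Continuous (fun s => |u j s t| ^ (2 - n)) := by
      rcases eq_or_lt_of_le hn2 with h | h
      · have h20 : (2:ℝ) - n = 0 := by rw [← h]; ring
        have heq : (fun s => |u j s t| ^ ((2:ℝ) - n)) = fun _ => (1:ℝ) := by
          funext s
          rw [h20, Real.rpow_zero]
        rw [heq]
        exact continuous_const
      · exact (continuous_abs.comp (hcv j)).rpow_const (fun x => Or.inr (by linarith))
    apply intervalIntegral.integral_mono_on (by norm_num)
      (hlc.intervalIntegrable _ _) (hrc.intervalIntegrable _ _)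
    intro s _
    exact tfe_pointwise n ε hn hn2 hε (u j s t)
  have hS0 : 0 ≤ ∑ j : Fin l, ∫ s in (0:ℝ)..1, (deriv (fun x => u j x t) s) ^ 2 :=
    Finset.sum_nonneg (fun j _ =>
      intervalIntegral.integral_nonneg (by norm_num) (fun x _ => sq_nonneg _))
  have hA0' : 0 ≤ ∑ j : Fin l, ∫ s in (0:ℝ)..1,
      tfeF n ε (u j s t) * (deriv (fun x => tfeW (u j) x t) s) ^ 2 :=
    Finset.sum_nonneg (fun j _ => hA0 j)
  have hB0' : 0 ≤ ∑ j : Fin l, ∫ s in (0:ℝ)..1, (u j s t) ^ 2 / tfeF n ε (u j s t) :=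
    Finset.sum_nonneg (fun j _ => hB0 j)
  have hsqprod : (Real.sqrt (∑ j : Fin l, ∫ s in (0:ℝ)..1,
        tfeF n ε (u j s t) * (deriv (fun x => tfeW (u j) x t) s) ^ 2)
      * Real.sqrt (∑ j : Fin l, ∫ s in (0:ℝ)..1, (u j s t) ^ 2 / tfeF n ε (u j s t))) ^ 2
      = (∑ j : Fin l, ∫ s in (0:ℝ)..1,
          tfeF n ε (u j s t) * (deriv (fun x => tfeW (u j) x t) s) ^ 2)
        * ∑ j : Fin l, ∫ s in (0:ℝ)..1, (u j s t) ^ 2 / tfeF n ε (u j s t) := by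
    rw [mul_pow, Real.sq_sqrt hA0', Real.sq_sqrt hB0']
  have hsq1 := mul_self_le_mul_self (by linarith : (0:ℝ) ≤
      (3 / 2) * ∑ j : Fin l, ∫ s in (0:ℝ)..1, (deriv (fun x => u j x t) s) ^ 2) hpart1
  have hprod := mul_le_mul_of_nonneg_left hBle hA0'
  nlinarith [hsq1, hsqprod, hprod]
end

section
/- Let u_j ∈ C¹([0,1]), j = 1,…,l, be functions on the edges of the graph such that at every vertex a all endpoint values coincide: u_j(1) = u_{j'}(1) whenever η(j) = η(j') = a, u_i(0) = u_{i'}(0) whenever τ(i) = τ(i') = a, and u_j(1) = u_i(0) whenever η(j) = a = τ(i). Assume the underlying undirected multigraph on the vertices {1,…,m} (with an edge joining τ(j) and η(j) for each j) is connected and every vertex is an endpoint of at least one edge. Set K := (1/l) ∑_{j=1}^l ∫₀¹ u_j(s) ds. Then for every j ∈ {1,…,l} and every s ∈ [0,1]: |u_j(s) − K| ≤ l · ( ∑_{k=1}^l ∫₀¹ (u_k'(s))² ds )^{1/2}. -/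
open Set intervalIntegral

/-- a Poincaré-type inequality on a connected metric graph. If `C¹` functions
`u_j` on the edges match at the vertices and the underlying multigraph is connected (with
every vertex incident to some edge), then each `u_j` is uniformly close to the average `K`,
with deviation controlled by the total Dirichlet energy. -/
theorem graph_poincare_inequality {l m : ℕ} (hl : 1 ≤ l) (hm : 1 ≤ m)
    (tl hd : Fin l → Fin m) (u : Fin l → ℝ → ℝ)
    (hu : ∀ j, ContDiff ℝ 1 (u j))
    (match_hh : ∀ j j', hd j = hd j' → u j 1 = u j' 1)
    (match_tt : ∀ i i', tl i = tl i' → u i 0 = u i' 0)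
    (match_ht : ∀ j i, hd j = tl i → u j 1 = u i 0)
    (hconn : ∀ a b : Fin m, Relation.ReflTransGen
      (fun x y => ∃ j, (tl j = x ∧ hd j = y) ∨ (tl j = y ∧ hd j = x)) a b)
    (hcov : ∀ a : Fin m, ∃ j, tl j = a ∨ hd j = a) :
    ∀ j, ∀ s ∈ Icc (0:ℝ) 1,
      |u j s - (1 / (l : ℝ)) * ∑ k : Fin l, ∫ y in (0:ℝ)..1, u k y|
        ≤ (l : ℝ) * Real.sqrt (∑ k : Fin l, ∫ y in (0:ℝ)..1, (deriv (u k) y) ^ 2) := by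
  intro j s hs
  set A : ℝ := ∑ k : Fin l, ∫ y in (0:ℝ)..1, (deriv (u k) y) ^ 2 with hAdef
  set E : ℝ := Real.sqrt A with hEdef
  have hderiv_cont : ∀ k, Continuous (deriv (u k)) :=
    fun k => (hu k).continuous_deriv le_rfl
  have hcont : ∀ k, Continuous (u k) := fun k => (hu k).continuous
  have hint_sq : ∀ k, IntervalIntegrable (fun y => (deriv (u k) y) ^ 2) MeasureTheory.volume 0 1 :=
    fun k => ((hderiv_cont k).pow 2).intervalIntegrable 0 1
  have hsq_nonneg : ∀ k, 0 ≤ ∫ y in (0:ℝ)..1, (deriv (u k) y) ^ 2 := by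
    intro k
    exact intervalIntegral.integral_nonneg (by norm_num) (fun y _ => sq_nonneg _)
  have hA_nonneg : 0 ≤ A := Finset.sum_nonneg fun k _ => hsq_nonneg k
  have hE0 : 0 ≤ E := Real.sqrt_nonneg _
  -- Lemma A : oscillation of each edge function is at most E
  have lemA : ∀ k : Fin l, ∀ x ∈ Icc (0:ℝ) 1, ∀ y ∈ Icc (0:ℝ) 1,
      |u k x - u k y| ≤ E := by
    intro k
    set B : ℝ := ∫ y in (0:ℝ)..1, (deriv (u k) y) ^ 2 with hBdef
    have hB0 : 0 ≤ B := hsq_nonneg k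
    have hBA : B ≤ A :=
      Finset.single_le_sum (f := fun k => ∫ y in (0:ℝ)..1, (deriv (u k) y) ^ 2)
        (fun i _ => hsq_nonneg i) (Finset.mem_univ k)
    have habs_int : IntervalIntegrable (fun y => |deriv (u k) y|) MeasureTheory.volume 0 1 :=
      ((hderiv_cont k).abs).intervalIntegrable 0 1
    -- ∫₀¹ |u_k'| ≤ √B  (Cauchy–Schwarz via ε-trick)
    have hCS : (∫ y in (0:ℝ)..1, |deriv (u k) y|) ≤ Real.sqrt B := by
      refine le_of_forall_pos_le_add ?_
      intro ε hε
      set c : ℝ := 1 / (Real.sqrt B + ε) with hcdef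
      have hsB : 0 ≤ Real.sqrt B := Real.sqrt_nonneg _
      have hc : 0 < c := by positivity
      have hpt : ∀ y ∈ Icc (0:ℝ) 1,
          |deriv (u k) y| ≤ (c * (deriv (u k) y) ^ 2 + 1 / c) / 2 := by
        intro y _
        have h1 : 0 ≤ (c * |deriv (u k) y| - 1) ^ 2 := sq_nonneg _
        have h2 : |deriv (u k) y| ^ 2 = (deriv (u k) y) ^ 2 := sq_abs _
        have h3 : c * (1 / c) = 1 := by field_simp
        nlinarith [abs_nonneg (deriv (u k) y), sq_nonneg c, mul_pos hc hc]
      have hmono : (∫ y in (0:ℝ)..1, |deriv (u k) y|)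
          ≤ ∫ y in (0:ℝ)..1, (c * (deriv (u k) y) ^ 2 + 1 / c) / 2 := by
        refine intervalIntegral.integral_mono_on (by norm_num) habs_int ?_ hpt
        exact (((hint_sq k).const_mul c).add intervalIntegrable_const).div_const 2
      have hval : (∫ y in (0:ℝ)..1, (c * (deriv (u k) y) ^ 2 + 1 / c) / 2)
          = (c * B + 1 / c) / 2 := by
        rw [intervalIntegral.integral_div,
          intervalIntegral.integral_add ((hint_sq k).const_mul c) intervalIntegrable_const,
          intervalIntegral.integral_const_mul, intervalIntegral.integral_const]
        simp
        exact Or.inl rfl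
      have hsq : Real.sqrt B ^ 2 = B := Real.sq_sqrt hB0
      have hfin : (c * B + 1 / c) / 2 ≤ Real.sqrt B + ε := by
        have h1c : 1 / c = Real.sqrt B + ε := by
          rw [hcdef]; field_simp
        have hcB : c * B ≤ Real.sqrt B := by
          rw [hcdef, div_mul_eq_mul_div, div_le_iff₀ (by positivity)]
          nlinarith
        rw [h1c]; nlinarith
      calc (∫ y in (0:ℝ)..1, |deriv (u k) y|) ≤ (c * B + 1 / c) / 2 := hval ▸ hmono
        _ ≤ Real.sqrt B + ε := hfin
    have key : ∀ x y : ℝ, x ∈ Icc (0:ℝ) 1 → y ∈ Icc (0:ℝ) 1 → y ≤ x →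
        |u k x - u k y| ≤ E := by
      intro x y hx hy hyx
      have hdiff : ∀ z ∈ uIcc y x, DifferentiableAt ℝ (u k) z :=
        fun z _ => ((hu k).differentiable one_ne_zero).differentiableAt
      have hint : IntervalIntegrable (deriv (u k)) MeasureTheory.volume y x :=
        (hderiv_cont k).intervalIntegrable y x
      have hftc : (∫ z in y..x, deriv (u k) z) = u k x - u k y :=
        intervalIntegral.integral_deriv_eq_sub hdiff hint
      have h1 : |u k x - u k y| ≤ ∫ z in y..x, |deriv (u k) z| := by
        rw [← hftc]
        simpa [Real.norm_eq_abs] using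
          intervalIntegral.norm_integral_le_integral_norm (f := deriv (u k))
            (μ := MeasureTheory.volume) (a := y) (b := x) hyx
      have h2 : (∫ z in y..x, |deriv (u k) z|) ≤ ∫ z in (0:ℝ)..1, |deriv (u k) z| := by
        refine intervalIntegral.integral_mono_interval hy.1 hyx hx.2 ?_ habs_int
        exact Filter.Eventually.of_forall fun z => abs_nonneg _
      have h3 : Real.sqrt B ≤ E := Real.sqrt_le_sqrt hBA
      linarith
    intro x hx y hy
    rcases le_total y x with h | h
    · exact key x y hx hy h
    · rw [abs_sub_comm]; exact key y x hy hx h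
  -- the simple graph on edges : adjacent iff they share a vertex
  set G : SimpleGraph (Fin l) :=
    { Adj := fun a b => a ≠ b ∧
        (tl a = tl b ∨ tl a = hd b ∨ hd a = tl b ∨ hd a = hd b)
      symm := by
        constructor
        intro a b ⟨hne, h⟩
        exact ⟨hne.symm, by tauto⟩
      loopless := by constructor; intro a ⟨hne, _⟩; exact hne rfl } with hGdef
  -- edges sharing a vertex have matching endpoint values
  have shared : ∀ a b : Fin l,
      (tl a = tl b ∨ tl a = hd b ∨ hd a = tl b ∨ hd a = hd b) →
      ∃ e e' : ℝ, e ∈ Icc (0:ℝ) 1 ∧ e' ∈ Icc (0:ℝ) 1 ∧ u a e = u b e' := by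
    intro a b h
    rcases h with h | h | h | h
    · exact ⟨0, 0, by norm_num, by norm_num, match_tt a b h⟩
    · exact ⟨0, 1, by norm_num, by norm_num, (match_ht b a h.symm).symm⟩
    · exact ⟨1, 0, by norm_num, by norm_num, match_ht a b h⟩
    · exact ⟨1, 1, by norm_num, by norm_num, match_hh a b h⟩
  -- bounding along a walk
  have walk_bound : ∀ (a b : Fin l) (p : G.Walk a b), ∀ x ∈ Icc (0:ℝ) 1,
      ∀ y ∈ Icc (0:ℝ) 1, |u a x - u b y| ≤ ((p.length : ℝ) + 1) * E := by
    intro a b p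
    induction p with
    | nil =>
        intro x hx y hy
        simpa using lemA _ x hx y hy
    | @cons a c b hadj p ih =>
        intro x hx y hy
        obtain ⟨e, e', he, he', heq⟩ := shared a c hadj.2
        have h1 : |u a x - u a e| ≤ E := lemA a x hx e he
        have h2 : |u c e' - u b y| ≤ ((p.length : ℝ) + 1) * E := ih e' he' y hy
        have h3 : |u a x - u b y| ≤ |u a x - u a e| + |u c e' - u b y| := by
          rw [heq] at *
          calc |u a x - u b y| = |(u a x - u c e') + (u c e' - u b y)| := by ring_nf
            _ ≤ |u a x - u c e'| + |u c e' - u b y| := abs_add_le _ _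
        have : ((SimpleGraph.Walk.cons hadj p).length : ℝ) = (p.length : ℝ) + 1 := by
          simp [SimpleGraph.Walk.length_cons]
        rw [this]
        linarith
  -- reachability in the edge graph
  have adj_or_eq : ∀ a b : Fin l, ∀ x : Fin m, (tl a = x ∨ hd a = x) →
      (tl b = x ∨ hd b = x) → G.Reachable a b := by
    intro a b x h1 h2
    by_cases hab : a = b
    · subst hab; rfl
    · refine SimpleGraph.Adj.reachable ?_
      refine ⟨hab, ?_⟩
      rcases h1 with h1 | h1 <;> rcases h2 with h2 | h2 <;>
        rw [h1, ← h2] at * <;> tauto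
  have reach : ∀ a b : Fin l, G.Reachable a b := by
    intro a b
    have key : ∀ (y : Fin m) (b : Fin l), (tl b = y ∨ hd b = y) →
        ∀ (x : Fin m), Relation.ReflTransGen
          (fun x y => ∃ j, (tl j = x ∧ hd j = y) ∨ (tl j = y ∧ hd j = x)) x y →
        ∀ a : Fin l, (tl a = x ∨ hd a = x) → G.Reachable a b := by
      intro y b hby x hxy
      induction hxy using Relation.ReflTransGen.head_induction_on with
      | refl => intro a hax; exact adj_or_eq a b y hax hby
      | @head x c hstep _ ih =>
          intro a hax
          obtain ⟨i, hi⟩ := hstep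
          have hix : tl i = x ∨ hd i = x := by tauto
          have hic : tl i = c ∨ hd i = c := by tauto
          exact (adj_or_eq a i x hax hix).trans (ih i hic)
    exact key (tl b) b (Or.inl rfl) (tl a) (hconn (tl a) (tl b)) a (Or.inl rfl)
  -- uniform bound between any two edge values
  have unif : ∀ (a b : Fin l), ∀ x ∈ Icc (0:ℝ) 1, ∀ y ∈ Icc (0:ℝ) 1,
      |u a x - u b y| ≤ (l : ℝ) * E := by
    intro a b x hx y hy
    obtain ⟨w⟩ := reach a b
    have hp := w.toPath.2
    have hlen : w.toPath.1.length < l := by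
      have := hp.length_lt
      simpa using this
    have h1 := walk_bound a b w.toPath.1 x hx y hy
    have h2 : ((w.toPath.1.length : ℝ) + 1) * E ≤ (l : ℝ) * E := by
      have : (w.toPath.1.length : ℝ) + 1 ≤ (l : ℝ) := by
        have : (w.toPath.1.length : ℕ) + 1 ≤ l := hlen
        exact_mod_cast this
      nlinarith
    linarith
  -- bound against each edge average
  have key2 : ∀ k : Fin l, |u j s - ∫ y in (0:ℝ)..1, u k y| ≤ (l : ℝ) * E := by
    intro k
    have heq : u j s - ∫ y in (0:ℝ)..1, u k y = ∫ y in (0:ℝ)..1, (u j s - u k y) := by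
      rw [intervalIntegral.integral_sub intervalIntegrable_const
        ((hcont k).intervalIntegrable 0 1)]
      simp
    rw [heq]
    have := intervalIntegral.norm_integral_le_of_norm_le_const
      (a := (0:ℝ)) (b := 1) (C := (l:ℝ) * E) (f := fun y => u j s - u k y)
      (fun y hy => by
        have hy' : y ∈ Icc (0:ℝ) 1 := by
          rw [uIoc_of_le (by norm_num : (0:ℝ) ≤ 1)] at hy
          exact Ioc_subset_Icc_self hy
        simpa [Real.norm_eq_abs] using unif j k s hs y hy')
    simpa [Real.norm_eq_abs] using this
  -- conclude by averaging
  have hl0 : (0:ℝ) < (l : ℝ) := by exact_mod_cast hl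
  have hsum : u j s - (1 / (l : ℝ)) * ∑ k : Fin l, ∫ y in (0:ℝ)..1, u k y
      = (1 / (l : ℝ)) * ∑ k : Fin l, (u j s - ∫ y in (0:ℝ)..1, u k y) := by
    rw [Finset.sum_sub_distrib, Finset.sum_const]
    simp only [Finset.card_univ, Fintype.card_fin, nsmul_eq_mul]
    field_simp
  rw [hsum, abs_mul, abs_of_pos (by positivity : (0:ℝ) < 1 / (l:ℝ))]
  have habs : |∑ k : Fin l, (u j s - ∫ y in (0:ℝ)..1, u k y)|
      ≤ ∑ k : Fin l, |u j s - ∫ y in (0:ℝ)..1, u k y| :=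
    Finset.abs_sum_le_sum_abs _ _
  have hsum2 : (∑ k : Fin l, |u j s - ∫ y in (0:ℝ)..1, u k y|)
      ≤ ∑ _k : Fin l, (l : ℝ) * E :=
    Finset.sum_le_sum fun k _ => key2 k
  have : (∑ _k : Fin l, (l : ℝ) * E) = (l : ℝ) * ((l : ℝ) * E) := by
    simp [Finset.sum_const, Finset.card_univ, mul_assoc]
  calc (1 / (l:ℝ)) * |∑ k : Fin l, (u j s - ∫ y in (0:ℝ)..1, u k y)|
      ≤ (1 / (l:ℝ)) * ((l:ℝ) * ((l:ℝ) * E)) := by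
        apply mul_le_mul_of_nonneg_left _ (by positivity)
        calc |∑ k : Fin l, (u j s - ∫ y in (0:ℝ)..1, u k y)|
            ≤ ∑ k : Fin l, |u j s - ∫ y in (0:ℝ)..1, u k y| := habs
          _ ≤ ∑ _k : Fin l, (l : ℝ) * E := hsum2
          _ = (l : ℝ) * ((l : ℝ) * E) := this
    _ = (l : ℝ) * E := by field_simp
end
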